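/- arXiv:2410.10337 — 3 statements merged into one kernel-verified Lean document; each statement's English description precedes it below -/
import Mathlib

section
/- If an NB-irreducible graph G satisfies the suspended path condition, then ρ(G) = Λ(G). -/
open Finset Filter

namespace NB

variable {V : Type} [Fintype V] [DecidableEq V] (G : SimpleGraph V) [DecidableRel G.Adj]

/-- Transition relation between darts: `e → f` iff the head of `e` is the tail of `f`
and `f` is not the reversal of `e`. -/
def Step (d e : G.Dart) : Prop := d.snd = e.fst ∧ e ≠ d.symm

instance (d e : G.Dart) : Decidable (Step G d e) :=
  inferInstanceAs (Decidable (d.snd = e.fst ∧ e ≠ d.symm))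

/-- `outdeg(e) = deg(h(e)) - 1`. -/
def outdeg (d : G.Dart) : ℕ := G.degree d.snd - 1

/-- `indeg(e) = deg(t(e)) - 1`. -/
def indeg (d : G.Dart) : ℕ := G.degree d.fst - 1

/-- The non-backtracking adjacency matrix. -/
def B : Matrix G.Dart G.Dart ℝ := fun d e => if Step G d e then 1 else 0

/-- The NBRW transition matrix. -/
noncomputable def transMat : Matrix G.Dart G.Dart ℝ :=
  fun d e => if Step G d e then ((outdeg G d : ℝ))⁻¹ else 0

/-- NB-irreducibility: connected, min degree ≥ 2, max degree > 2. -/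
def NBIrreducible : Prop :=
  G.Connected ∧ (∀ v, 2 ≤ G.degree v) ∧ (∃ v, 2 < G.degree v)

/-- `Λ(G)`, the geometric mean of out-degrees over directed edges. -/
noncomputable def Lambda : ℝ :=
  (∏ d : G.Dart, (outdeg G d : ℝ)) ^ ((Fintype.card G.Dart : ℝ)⁻¹)

/-- The Perron (largest real) eigenvalue of a matrix. -/
noncomputable def perron {n : Type} [Fintype n] (M : Matrix n n ℝ) : ℝ :=
  sSup {r : ℝ | ∃ v : n → ℝ, v ≠ 0 ∧ M.mulVec v = r • v}

/-- A length-`ℓ` non-backtracking walk is a sequence of `ℓ+1` darts with consecutive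
transitions. -/
def IsNBWalk {ℓ : ℕ} (ω : Fin (ℓ + 1) → G.Dart) : Prop :=
  ∀ i : Fin ℓ, Step G (ω i.castSucc) (ω i.succ)

instance {ℓ : ℕ} (ω : Fin (ℓ + 1) → G.Dart) : Decidable (IsNBWalk G ω) :=
  inferInstanceAs (Decidable (∀ i : Fin ℓ, Step G (ω i.castSucc) (ω i.succ)))

/-- The set `Ω_ℓ` of length-`ℓ` non-backtracking walks. -/
def NBWalk (ℓ : ℕ) : Type := {ω : Fin (ℓ + 1) → G.Dart // IsNBWalk G ω}

instance (ℓ : ℕ) : Fintype (NBWalk G ℓ) := Subtype.fintype _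

/-- The NBRW probability of a walk, started from the uniform stationary distribution. -/
noncomputable def mu {ℓ : ℕ} (ω : NBWalk G ℓ) : ℝ :=
  (Fintype.card G.Dart : ℝ)⁻¹ * ∏ i : Fin ℓ, ((outdeg G (ω.1 i.castSucc) : ℝ))⁻¹

/-- Expectation over `Ω_ℓ` with respect to `μ`. -/
noncomputable def expect {ℓ : ℕ} (X : NBWalk G ℓ → ℝ) : ℝ :=
  ∑ ω : NBWalk G ℓ, mu G ω * X ω

/-- Variance over `Ω_ℓ` with respect to `μ`. -/
noncomputable def var {ℓ : ℕ} (X : NBWalk G ℓ → ℝ) : ℝ :=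
  expect G (fun ω => (X ω - expect G X) ^ 2)

/-- `R_ℓ(ω) = ∑ log₂ outdeg(e_i)`: the number of random bits consumed. -/
noncomputable def bits {ℓ : ℕ} (ω : NBWalk G ℓ) : ℝ :=
  ∑ i : Fin ℓ, Real.logb 2 (outdeg G (ω.1 i.castSucc))

/-- A suspended path `(e_0, …, e_n)` (of length `n+1`). -/
def IsSuspendedPath {n : ℕ} (P : Fin (n + 1) → G.Dart) : Prop :=
  (∀ i : Fin n, Step G (P i.castSucc) (P i.succ)) ∧
  (∀ i : Fin n, outdeg G (P i.castSucc) = 1) ∧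
  1 < outdeg G (P (Fin.last n)) ∧
  (∀ i : Fin n, indeg G (P i.succ) = 1) ∧
  1 < indeg G (P 0)

/-- The suspended path condition: `outdeg(P)·indeg(P) = Λ(G)^{2|P|}`. -/
noncomputable def SuspendedPathCondition : Prop :=
  ∀ (n : ℕ) (P : Fin (n + 1) → G.Dart), IsSuspendedPath G P →
    (outdeg G (P (Fin.last n)) : ℝ) * (indeg G (P 0) : ℝ) = Lambda G ^ (2 * (n + 1))

/-- A non-backtracking cycle `(e_0, …, e_n)` (of length `n+1`). -/
def IsNBCycle {n : ℕ} (C : Fin (n + 1) → G.Dart) : Prop :=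
  ∀ i : Fin (n + 1), Step G (C i) (C (i + 1))

/-- The cycle condition: `∏_{e∈C} outdeg(e) = Λ(G)^{|C|}`. -/
noncomputable def CycleCondition : Prop :=
  ∀ (n : ℕ) (C : Fin (n + 1) → G.Dart), IsNBCycle G C →
    (∏ i : Fin (n + 1), (outdeg G (C i) : ℝ)) = Lambda G ^ (n + 1)


/-! ### Auxiliary machinery for the proof -/

section Aux

/-- The set of darts reachable from `e` in one non-backtracking step. -/
def succs (e : G.Dart) : Finset G.Dart := Finset.univ.filter (fun f => Step G e f)

lemma mem_succs {e f : G.Dart} : f ∈ succs G e ↔ Step G e f := by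
  simp [succs]

lemma card_succs (e : G.Dart) : (succs G e).card = outdeg G e := by
  classical
  have hfib : (Finset.univ.filter (fun d : G.Dart => d.fst = e.snd)).card = G.degree e.snd := by
    simpa using SimpleGraph.dart_fst_fiber_card_eq_degree G e.snd
  have hmem : e.symm ∈ Finset.univ.filter (fun d : G.Dart => d.fst = e.snd) := by
    simp [SimpleGraph.Dart.symm]
  have hse : succs G e = (Finset.univ.filter (fun d : G.Dart => d.fst = e.snd)).erase e.symm := by
    ext f
    simp only [mem_succs, Step, Finset.mem_filter, Finset.mem_erase, Finset.mem_univ, true_and]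
    constructor
    · rintro ⟨h1, h2⟩; exact ⟨h2, h1.symm⟩
    · rintro ⟨h2, h1⟩; exact ⟨h1.symm, h2⟩
  rw [hse, Finset.card_erase_of_mem hmem, hfib, outdeg]

lemma one_le_outdeg (hdeg : ∀ v, 2 ≤ G.degree v) (e : G.Dart) : 1 ≤ outdeg G e := by
  have := hdeg e.snd; unfold outdeg; omega

/-- The forced next dart (junk value when there are several successors). -/
noncomputable def nxt (e : G.Dart) : G.Dart :=
  if h : (succs G e).Nonempty then h.choose else e

lemma nxt_mem {e : G.Dart} (h : (succs G e).Nonempty) : nxt G e ∈ succs G e := by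
  rw [nxt, dif_pos h]; exact h.choose_spec

lemma succs_nonempty (hdeg : ∀ v, 2 ≤ G.degree v) (e : G.Dart) : (succs G e).Nonempty := by
  rw [← Finset.card_pos, card_succs]
  have := one_le_outdeg G hdeg e; omega

lemma step_nxt (hdeg : ∀ v, 2 ≤ G.degree v) (e : G.Dart) : Step G e (nxt G e) :=
  (mem_succs G).mp (nxt_mem G (succs_nonempty G hdeg e))

lemma succs_eq_singleton {e : G.Dart} (h1 : outdeg G e = 1) : succs G e = {nxt G e} := by
  have hc : (succs G e).card = 1 := by rw [card_succs, h1]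
  obtain ⟨x, hx⟩ := Finset.card_eq_one.mp hc
  have hne : (succs G e).Nonempty := ⟨x, hx ▸ Finset.mem_singleton_self x⟩
  have hmem := nxt_mem G hne
  rw [hx, Finset.mem_singleton] at hmem
  rw [hx, hmem]

/-- Termination: iterating the forced step from any dart eventually reaches a branching dart. -/
lemma exists_branch (hc : G.Connected) (hdeg : ∀ v, 2 ≤ G.degree v)
    (hmax : ∃ v, 2 < G.degree v) (e : G.Dart) :
    ∃ k, 1 < outdeg G ((nxt G)^[k] e) := by
  by_contra hcon
  push_neg at hcon
  set it : ℕ → G.Dart := fun k => (nxt G)^[k] e with hit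
  have hone : ∀ k, outdeg G (it k) = 1 := by
    intro k
    have h2 := one_le_outdeg G hdeg (it k)
    have h3 : outdeg G (it k) ≤ 1 := hcon k
    omega
  have hsucc : ∀ k, it (k + 1) = nxt G (it k) := by
    intro k
    simp only [hit, Function.iterate_succ_apply']
  have hstep : ∀ k, Step G (it k) (it (k + 1)) := by
    intro k; rw [hsucc k]; exact step_nxt G hdeg _
  -- pigeonhole to find a periodic point
  obtain ⟨i', j', hij', hije⟩ := Fintype.exists_ne_map_eq_of_card_lt
    (fun k : Fin (Fintype.card G.Dart + 1) => it k) (by simp)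
  have hper0 : ∃ i p, 0 < p ∧ it (i + p) = it i := by
    rcases lt_or_gt_of_ne hij' with hlt | hlt
    · exact ⟨i', j' - i', by omega, by rw [Nat.add_sub_cancel' hlt.le]; exact hije.symm⟩
    · exact ⟨j', i' - j', by omega, by rw [Nat.add_sub_cancel' hlt.le]; exact hije⟩
  obtain ⟨i, p, hp, hper1⟩ := hper0
  have hper : ∀ m, i ≤ m → it (m + p) = it m := by
    intro m hm
    have h1 : it (m + p) = (nxt G)^[m - i] (it (i + p)) := by
      rw [hit]
      simp only []
      rw [← Function.iterate_add_apply]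
      congr 1
      omega
    have h2 : it m = (nxt G)^[m - i] (it i) := by
      rw [hit]
      simp only []
      rw [← Function.iterate_add_apply]
      congr 1
      omega
    rw [h1, hper1, ← h2]
  -- the set of vertices visited by the periodic part
  set T : Set V := {v | ∃ k, i + 1 ≤ k ∧ (it k).fst = v} with hT
  have hfst : ∀ k, (it (k + 1)).fst = (it k).snd := fun k => (hstep k).1.symm
  have hdegT : ∀ v ∈ T, G.degree v = 2 := by
    rintro v ⟨k, hk, hv⟩
    obtain ⟨k', rfl⟩ : ∃ k', k = k' + 1 := ⟨k - 1, by omega⟩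
    rw [hfst k'] at hv
    subst hv
    have h1 := hone k'
    have h2 := hdeg ((it k').snd)
    unfold outdeg at h1
    omega
  have hclosed : ∀ v ∈ T, ∀ u, G.Adj v u → u ∈ T := by
    rintro v ⟨k, hk, hv⟩ u hadj
    obtain ⟨k', rfl⟩ : ∃ k', k = k' + 1 := ⟨k - 1, by omega⟩
    -- the fiber of darts with tail v has exactly two elements
    classical
    set fiber : Finset G.Dart := Finset.univ.filter (fun d => d.fst = v) with hfiber
    have hcard : fiber.card = 2 := by
      have : fiber.card = G.degree v := by
        simpa [hfiber] using SimpleGraph.dart_fst_fiber_card_eq_degree G v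
      rw [this]
      exact hdegT v ⟨k' + 1, hk, hv⟩
    have hcur : it (k' + 1) ∈ fiber := by simp [hfiber, hv]
    have hprev : (it k').symm ∈ fiber := by
      have hsnd : (it k').snd = v := by rw [← hfst k']; exact hv
      simp [hfiber, SimpleGraph.Dart.symm, hsnd]
    have hne2 : it (k' + 1) ≠ (it k').symm := (hstep k').2
    have hpair : ({it (k' + 1), (it k').symm} : Finset G.Dart) ⊆ fiber := by
      intro g hg
      rcases Finset.mem_insert.mp hg with rfl | hg
      · exact hcur
      · rw [Finset.mem_singleton] at hg; rw [hg]; exact hprev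
    have heq : ({it (k' + 1), (it k').symm} : Finset G.Dart) = fiber := by
      apply Finset.eq_of_subset_of_card_le hpair
      rw [hcard, Finset.card_pair hne2]
    have hg : (⟨(v, u), hadj⟩ : G.Dart) ∈ fiber := by simp [hfiber]
    rw [← heq] at hg
    rcases Finset.mem_insert.mp hg with hg | hg
    · -- u is the head of the next dart
      have : u = (it (k' + 1)).snd := by rw [← hg]
      refine ⟨k' + 2, by omega, ?_⟩
      rw [hfst (k' + 1), ← this]
    · rw [Finset.mem_singleton] at hg
      have hu : u = (it k').fst := by
        have : u = (it k').symm.snd := by rw [← hg]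
        rw [this]; rfl
      refine ⟨k' + p, by omega, ?_⟩
      rw [hper k' (by omega), ← hu]
  -- connectivity forces all vertices to have degree 2, contradiction
  obtain ⟨u0, hu0⟩ := hmax
  have hv0 : (it (i + 1)).fst ∈ T := ⟨i + 1, le_refl _, rfl⟩
  obtain ⟨w⟩ := hc.preconnected ((it (i + 1)).fst) u0
  have walkT : ∀ {x y : V} (_ : G.Walk x y), x ∈ T → y ∈ T := by
    intro x y w
    induction w with
    | nil => exact id
    | cons hadj p ih => intro hx; exact ih (hclosed _ hx _ hadj)
  have := hdegT u0 (walkT w hv0)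
  omega

variable {G} in
/-- Distance to the next branching dart. -/
noncomputable def bl (ht : ∀ e : G.Dart, ∃ k, 1 < outdeg G ((nxt G)^[k] e)) (e : G.Dart) : ℕ :=
  Nat.find (ht e)

variable {G} in
/-- The Perron eigenvector of `B`. -/
noncomputable def psi (ht : ∀ e : G.Dart, ∃ k, 1 < outdeg G ((nxt G)^[k] e)) (e : G.Dart) : ℝ :=
  Lambda G ^ (-((bl ht e : ℤ) + 1)) * Real.sqrt (outdeg G ((nxt G)^[bl ht e] e))

variable {G}
variable {ht : ∀ e : G.Dart, ∃ k, 1 < outdeg G ((nxt G)^[k] e)}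

lemma bl_spec (e : G.Dart) : 1 < outdeg G ((nxt G)^[bl ht e] e) := Nat.find_spec (ht e)

lemma bl_min {e : G.Dart} {k : ℕ} (hk : k < bl ht e) : ¬ 1 < outdeg G ((nxt G)^[k] e) :=
  Nat.find_min (ht e) hk

lemma bl_eq_zero {e : G.Dart} (h1 : 1 < outdeg G e) : bl ht e = 0 := by
  rw [bl, Nat.find_eq_zero]
  simpa using h1

lemma bl_succ {e : G.Dart} (h1 : outdeg G e = 1) : bl ht e = bl ht (nxt G e) + 1 := by
  have hpos : 0 < bl ht e := by
    rcases Nat.eq_zero_or_pos (bl ht e) with h | h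
    · exfalso
      have := bl_spec (ht := ht) e
      rw [h] at this
      simp only [Function.iterate_zero_apply] at this
      omega
    · exact h
  have key : bl ht (nxt G e) = bl ht e - 1 := by
    rw [bl, Nat.find_eq_iff]
    constructor
    · have := bl_spec (ht := ht) e
      rw [show bl ht e = (bl ht e - 1) + 1 by omega, Function.iterate_succ_apply] at this
      exact this
    · intro m hm
      have := bl_min (ht := ht) (e := e) (k := m + 1) (by omega)
      rw [Function.iterate_succ_apply] at this
      exact this
  omega

lemma lambda_pos (hdeg : ∀ v, 2 ≤ G.degree v) : 0 < Lambda G := by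
  apply Real.rpow_pos_of_pos
  apply Finset.prod_pos
  intro d _
  have := one_le_outdeg G hdeg d
  exact_mod_cast Nat.lt_of_lt_of_le Nat.zero_lt_one this

lemma psi_pos (hdeg : ∀ v, 2 ≤ G.degree v) (e : G.Dart) : 0 < psi ht e := by
  apply mul_pos
  · exact zpow_pos (lambda_pos hdeg) _
  · rw [Real.sqrt_pos]
    have := bl_spec (ht := ht) e
    exact_mod_cast Nat.lt_of_lt_of_le Nat.zero_lt_one (by omega)

/-- The key local eigen-equation for `psi`. -/
lemma sum_psi (hdeg : ∀ v, 2 ≤ G.degree v) (hs : SuspendedPathCondition G) (e : G.Dart) :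
    ∑ f ∈ succs G e, psi ht f = Lambda G * psi ht e := by
  have hΛ : 0 < Lambda G := lambda_pos hdeg
  rcases eq_or_lt_of_le (one_le_outdeg G hdeg e) with h1 | h1
  · -- forced step
    have h1 : outdeg G e = 1 := h1.symm
    rw [succs_eq_singleton G h1, Finset.sum_singleton]
    have hb : bl ht e = bl ht (nxt G e) + 1 := bl_succ h1
    have hbrk : (nxt G)^[bl ht e] e = (nxt G)^[bl ht (nxt G e)] (nxt G e) := by
      rw [hb, Function.iterate_succ_apply]
    rw [psi, psi, hbrk, hb, ← mul_assoc, ← zpow_one_add₀ hΛ.ne']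
    congr 2
  · -- branching step
    set d : ℕ := outdeg G e with hd
    have key : ∀ f ∈ succs G e, psi ht f = (Real.sqrt d)⁻¹ := by
      intro f hf
      have hstepf : Step G e f := (mem_succs G).mp hf
      set n : ℕ := bl ht f with hn
      set P : Fin (n + 1) → G.Dart := fun i => (nxt G)^[(i : ℕ)] f with hP
      have hPstep : ∀ k : ℕ, k < n → Step G ((nxt G)^[k] f) ((nxt G)^[k + 1] f) := by
        intro k _
        rw [Function.iterate_succ_apply']
        exact step_nxt G hdeg _
      have hPone : ∀ k : ℕ, k < n → outdeg G ((nxt G)^[k] f) = 1 := by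
        intro k hk
        have := bl_min (ht := ht) (e := f) hk
        have h2 := one_le_outdeg G hdeg ((nxt G)^[k] f)
        omega
      have hindegf : indeg G f = d := by
        rw [indeg, hstepf.1.symm, hd, outdeg]
      have hpath : IsSuspendedPath G P := by
        refine ⟨?_, ?_, ?_, ?_, ?_⟩
        · intro i
          have : ((i.succ : Fin (n + 1)) : ℕ) = (i : ℕ) + 1 := rfl
          simpa [hP, Fin.coe_castSucc, this] using hPstep i i.isLt
        · intro i
          exact hPone i i.isLt
        · have : ((Fin.last n : Fin (n + 1)) : ℕ) = n := rfl
          simpa [hP, this] using bl_spec (ht := ht) f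
        · intro i
          have hstep' := hPstep i i.isLt
          have : ((i.succ : Fin (n + 1)) : ℕ) = (i : ℕ) + 1 := rfl
          rw [hP]
          simp only [this]
          rw [indeg, ← hstep'.1]
          have hone := hPone i i.isLt
          unfold outdeg at hone
          exact hone
        · have : P 0 = f := by simp [hP]
          rw [this, hindegf]
          exact h1
      have hcond := hs n P hpath
      have hlast : P (Fin.last n) = (nxt G)^[n] f := rfl
      have h0 : P 0 = f := by simp [hP]
      rw [hlast, h0, hindegf] at hcond
      -- hcond : (outdeg G ((nxt G)^[n] f) : ℝ) * d = Lambda G ^ (2 * (n + 1))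
      have hdpos : (0 : ℝ) < d := by
        exact_mod_cast Nat.lt_of_lt_of_le Nat.zero_lt_one h1.le
      have hXval : (outdeg G ((nxt G)^[n] f) : ℝ) = Lambda G ^ (2 * (n + 1)) / d :=
        (eq_div_iff hdpos.ne').mpr hcond
      have hsq : Lambda G ^ (2 * (n + 1)) = (Lambda G ^ (n + 1)) ^ 2 := by
        rw [mul_comm, pow_mul]
      have hsqrt : Real.sqrt (outdeg G ((nxt G)^[n] f)) = Lambda G ^ (n + 1) / Real.sqrt d := by
        rw [hXval, hsq, Real.sqrt_div (sq_nonneg _), Real.sqrt_sq (pow_nonneg hΛ.le _)]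
      rw [psi, ← hn, hsqrt]
      rw [div_eq_mul_inv, ← mul_assoc]
      have : Lambda G ^ (-((n : ℤ) + 1)) * Lambda G ^ (n + 1) = 1 := by
        rw [← zpow_natCast (Lambda G) (n + 1), ← zpow_add₀ hΛ.ne']
        have hz : -((n : ℤ) + 1) + ((n + 1 : ℕ) : ℤ) = 0 := by push_cast; ring
        rw [hz, zpow_zero]
      rw [this, one_mul]
    rw [Finset.sum_congr rfl key, Finset.sum_const, card_succs, ← hd]
    have hbl0 : bl ht e = 0 := bl_eq_zero h1
    rw [psi, hbl0]
    simp only [Function.iterate_zero_apply, Nat.cast_zero, neg_add, neg_zero, zero_add,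
      zero_sub]
    rw [← hd]
    have hdnn : (0 : ℝ) ≤ d := Nat.cast_nonneg d
    have : (Lambda G) * ((Lambda G) ^ (-1 : ℤ) * Real.sqrt d) = Real.sqrt d := by
      rw [zpow_neg_one, ← mul_assoc, mul_inv_cancel₀ hΛ.ne', one_mul]
    rw [this, nsmul_eq_mul, ← div_eq_mul_inv, Real.div_sqrt]

lemma step_symm_iff {a b : G.Dart} : Step G a b ↔ Step G b.symm a.symm := by
  unfold Step
  constructor
  · rintro ⟨h1, h2⟩
    refine ⟨?_, ?_⟩
    · show b.fst = a.snd
      exact h1.symm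
    · rw [SimpleGraph.Dart.symm_symm]
      intro hcon
      exact h2 (by rw [← hcon])
  · rintro ⟨h1, h2⟩
    rw [SimpleGraph.Dart.symm_symm] at h2
    refine ⟨?_, ?_⟩
    · exact h1.symm
    · intro hcon
      exact h2 (by rw [hcon])

/-- Left eigen-equation: summing `psi ∘ symm` over predecessors. -/
lemma sum_psi_symm (hdeg : ∀ v, 2 ≤ G.degree v) (hs : SuspendedPathCondition G) (f : G.Dart) :
    ∑ e ∈ Finset.univ.filter (fun e => Step G e f), psi ht e.symm
      = Lambda G * psi ht f.symm := by
  rw [← sum_psi (ht := ht) hdeg hs f.symm]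
  apply Finset.sum_nbij' (i := fun e => e.symm) (j := fun g => g.symm)
  · intro e he
    rw [Finset.mem_filter] at he
    rw [mem_succs]
    exact step_symm_iff.mp he.2
  · intro g hg
    rw [mem_succs] at hg
    rw [Finset.mem_filter]
    refine ⟨Finset.mem_univ _, ?_⟩
    have := step_symm_iff.mp hg
    rwa [SimpleGraph.Dart.symm_symm] at this
  · intro e _; exact SimpleGraph.Dart.symm_symm e
  · intro g _; exact SimpleGraph.Dart.symm_symm g
  · intro e _; rfl

end Aux

/-- The suspended path condition implies `ρ(G) = Λ(G)`. -/
theorem suspended_implies_rho_eq_Lambda (h : NBIrreducible G)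
    (hs : SuspendedPathCondition G) : perron (B G) = Lambda G := by
  obtain ⟨hc, hdeg, hmax⟩ := h
  have ht : ∀ e : G.Dart, ∃ k, 1 < outdeg G ((nxt G)^[k] e) :=
    exists_branch G hc hdeg hmax
  have hΛ : 0 < Lambda G := lambda_pos hdeg
  -- a dart exists
  obtain ⟨v0, hv0⟩ := hmax
  obtain ⟨w0, hw0⟩ : ∃ w, G.Adj v0 w := by
    rw [← SimpleGraph.degree_pos_iff_exists_adj]
    omega
  set d0 : G.Dart := ⟨(v0, w0), hw0⟩ with hd0
  -- mulVec of B in terms of succs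
  have hmv : ∀ (u : G.Dart → ℝ) (e : G.Dart),
      (B G).mulVec u e = ∑ f ∈ succs G e, u f := by
    intro u e
    rw [succs, Finset.sum_filter]
    simp [Matrix.mulVec, dotProduct, B, ite_mul]
  -- Λ is an eigenvalue
  have hmem : Lambda G ∈ {r : ℝ | ∃ v : G.Dart → ℝ, v ≠ 0 ∧ (B G).mulVec v = r • v} := by
    refine ⟨psi ht, ?_, ?_⟩
    · intro hcon
      have h0 := congrFun hcon d0
      have hp := psi_pos (ht := ht) hdeg d0
      rw [h0] at hp
      simp at hp
    · funext e
      rw [hmv, Pi.smul_apply, smul_eq_mul]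
      exact sum_psi hdeg hs e
  -- upper bound
  have hub : ∀ r ∈ {r : ℝ | ∃ v : G.Dart → ℝ, v ≠ 0 ∧ (B G).mulVec v = r • v},
      r ≤ Lambda G := by
    rintro r ⟨v, hvne, hv⟩
    have hpoint : ∀ e, |r| * |v e| ≤ ∑ f ∈ succs G e, |v f| := by
      intro e
      have he : ∑ f ∈ succs G e, v f = r * v e := by
        have h1 := congrFun hv e
        rw [hmv] at h1
        simpa using h1
      calc |r| * |v e| = |∑ f ∈ succs G e, v f| := by rw [he, abs_mul]
        _ ≤ ∑ f ∈ succs G e, |v f| := Finset.abs_sum_le_sum_abs _ _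
    set S0 : ℝ := ∑ e : G.Dart, psi ht e.symm * |v e| with hS0
    have hS0pos : 0 < S0 := by
      obtain ⟨e0, he0⟩ := Function.ne_iff.mp hvne
      apply Finset.sum_pos'
      · intro e _
        exact mul_nonneg (psi_pos hdeg e.symm).le (abs_nonneg _)
      · exact ⟨e0, Finset.mem_univ _,
          mul_pos (psi_pos hdeg e0.symm) (abs_pos.mpr (by simpa using he0))⟩
    have hchain : |r| * S0 ≤ Lambda G * S0 := by
      calc |r| * S0 = ∑ e : G.Dart, psi ht e.symm * (|r| * |v e|) := by
            rw [hS0, Finset.mul_sum]; apply Finset.sum_congr rfl; intro e _; ring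
        _ ≤ ∑ e : G.Dart, psi ht e.symm * (∑ f ∈ succs G e, |v f|) := by
            apply Finset.sum_le_sum
            intro e _
            exact mul_le_mul_of_nonneg_left (hpoint e) (psi_pos hdeg e.symm).le
        _ = ∑ e : G.Dart, ∑ f : G.Dart,
              (if Step G e f then psi ht e.symm * |v f| else 0) := by
            apply Finset.sum_congr rfl; intro e _
            rw [Finset.mul_sum, succs, Finset.sum_filter]
        _ = ∑ f : G.Dart, ∑ e : G.Dart,
              (if Step G e f then psi ht e.symm * |v f| else 0) := Finset.sum_comm
        _ = ∑ f : G.Dart,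
              (∑ e ∈ Finset.univ.filter (fun e => Step G e f), psi ht e.symm) * |v f| := by
            apply Finset.sum_congr rfl; intro f _
            rw [Finset.sum_mul, Finset.sum_filter]
        _ = ∑ f : G.Dart, Lambda G * psi ht f.symm * |v f| := by
            apply Finset.sum_congr rfl; intro f _
            rw [sum_psi_symm hdeg hs f]
        _ = Lambda G * S0 := by
            rw [hS0, Finset.mul_sum]; apply Finset.sum_congr rfl; intro f _; ring
    have habs : |r| ≤ Lambda G := le_of_mul_le_mul_right hchain hS0pos
    exact (le_abs_self r).trans habs
  have hbdd : BddAbove {r : ℝ | ∃ v : G.Dart → ℝ, v ≠ 0 ∧ (B G).mulVec v = r • v} :=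
    ⟨Lambda G, hub⟩
  unfold perron
  exact le_antisymm (csSup_le ⟨Lambda G, hmem⟩ hub) (le_csSup hbdd hmem)

end NB
end

section
/- If an NB-irreducible graph G satisfies ρ(G) = Λ(G), then G satisfies the cycle condition: for every non-backtracking cycle C in G, ∏_{e∈C} outdeg(e) = Λ(G)^{|C|}. -/
open Finset Filter

namespace NB

variable {V : Type} [Fintype V] [DecidableEq V] (G : SimpleGraph V) [DecidableRel G.Adj]

section StrongConn

open SimpleGraph

variable {V : Type} [Fintype V] [DecidableEq V] {G : SimpleGraph V} [DecidableRel G.Adj]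

/-- Reachability in the non-backtracking digraph. -/
def Reach (G : SimpleGraph V) [DecidableRel G.Adj] (d e : G.Dart) : Prop :=
  Relation.ReflTransGen (Step G) d e

lemma reach_extend {d e : G.Dart} (he : Reach G d e) {x : V} (hadj : G.Adj e.snd x)
    (hx : x ≠ e.fst) : Reach G d ⟨(e.snd, x), hadj⟩ := by
  refine he.tail ⟨rfl, ?_⟩
  intro hcon
  apply hx
  have : (⟨(e.snd, x), hadj⟩ : G.Dart).toProd = e.symm.toProd := by rw [hcon]
  have h2 : e.symm.toProd = (e.snd, e.fst) := rfl
  rw [h2] at this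
  exact congrArg Prod.snd this

/-- A witness that `v` is a reachable head from `d`. -/
def IsWit (G : SimpleGraph V) [DecidableRel G.Adj] (d : G.Dart) (v : V) (e : G.Dart) : Prop :=
  Reach G d e ∧ e.snd = v

def InH (G : SimpleGraph V) [DecidableRel G.Adj] (d : G.Dart) (v : V) : Prop :=
  ∃ e, IsWit G d v e

def Sat (G : SimpleGraph V) [DecidableRel G.Adj] (d : G.Dart) (v : V) : Prop :=
  ∃ e f, IsWit G d v e ∧ IsWit G d v f ∧ e.fst ≠ f.fst

/-- From a saturated vertex, every outgoing dart is reachable. -/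
lemma sat_out {d : G.Dart} {v : V} (hs : Sat G d v) {x : V} (hadj : G.Adj v x) :
    Reach G d ⟨(v, x), hadj⟩ := by
  obtain ⟨e, f, ⟨hre, hev⟩, ⟨hrf, hfv⟩, hne⟩ := hs
  by_cases hxe : x = e.fst
  · have hxf : x ≠ f.fst := by rw [hxe]; exact hne
    subst hfv
    exact reach_extend hrf hadj hxf
  · subst hev
    exact reach_extend hre hadj hxe
end StrongConn
section StrongConn2

open SimpleGraph

variable {V : Type} [Fintype V] [DecidableEq V] {G : SimpleGraph V} [DecidableRel G.Adj]

lemma closed_walk_mem {P : V → Prop} (hP : ∀ x, P x → ∀ u, G.Adj x u → P u)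
    {a b : V} (w : G.Walk a b) (ha : P a) : P b := by
  induction w with
  | nil => exact ha
  | cons h _ ih => exact ih (hP _ ha _ h)

theorem reach_all (hconn : G.Connected) (hmin : ∀ v, 2 ≤ G.degree v)
    (hmax : ∃ v, 2 < G.degree v) (d e : G.Dart) : Reach G d e := by
  classical
  set p : V → V := fun v => if h : InH G d v then h.choose.fst else v with hp
  have hpwit : ∀ v (h : InH G d v), IsWit G d v h.choose := fun v h => h.choose_spec
  set T : Finset V := Finset.univ.filter (fun v => InH G d v ∧ ¬ Sat G d v) with hTdef
  have memT : ∀ {x}, x ∈ T ↔ InH G d x ∧ ¬ Sat G d x := by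
    intro x; simp [hTdef]
  have key1 : ∀ x ∈ T, ∀ e, IsWit G d x e → e.fst = p x := by
    intro x hx e he
    obtain ⟨hIn, hSat⟩ := memT.mp hx
    have hpx : p x = hIn.choose.fst := by simp [hp, dif_pos hIn]
    rw [hpx]
    by_contra hne
    exact hSat ⟨e, hIn.choose, he, hpwit x hIn, hne⟩
  have key2 : ∀ x ∈ T, G.Adj x (p x) := by
    intro x hx
    obtain ⟨hIn, _⟩ := memT.mp hx
    obtain ⟨e, he⟩ := hIn
    have := key1 x hx e he
    rw [← this, ← he.2]
    exact e.adj.symm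
  have key3 : ∀ x ∈ T, ∀ u, G.Adj x u → u ≠ p x → u ∈ T ∧ p u = x := by
    intro x hx u hadj hne
    obtain ⟨hIn, _⟩ := memT.mp hx
    obtain ⟨e, hre, hesnd⟩ := hIn
    subst hesnd
    have hefst : e.fst = p e.snd := key1 _ hx e ⟨hre, rfl⟩
    have hune : u ≠ e.fst := by rw [hefst]; exact hne
    have hg : Reach G d ⟨(e.snd, u), hadj⟩ := reach_extend hre hadj hune
    have hwitu : IsWit G d u ⟨(e.snd, u), hadj⟩ := ⟨hg, rfl⟩
    have hInu : InH G d u := ⟨_, hwitu⟩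
    have hSatu : ¬ Sat G d u := by
      intro hs
      have hr2 : Reach G d ⟨(u, e.snd), hadj.symm⟩ := sat_out hs hadj.symm
      have : (⟨(u, e.snd), hadj.symm⟩ : G.Dart).fst = p e.snd :=
        key1 _ hx _ ⟨hr2, rfl⟩
      exact hne this
    have huT : u ∈ T := memT.mpr ⟨hInu, hSatu⟩
    refine ⟨huT, ?_⟩
    have := key1 u huT _ hwitu
    exact this.symm
  -- counting: T must be empty
  have hT : T = ∅ := by
    by_contra hTne
    obtain ⟨x₀, hx₀⟩ := Finset.nonempty_of_ne_empty hTne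
    have hsub : ∀ x ∈ T, (G.neighborFinset x).erase (p x) ⊆ T.filter (fun u => p u = x) := by
      intro x hx u hu
      rw [Finset.mem_erase, SimpleGraph.mem_neighborFinset] at hu
      obtain ⟨hT', hpu⟩ := key3 x hx u hu.2 hu.1
      exact Finset.mem_filter.mpr ⟨hT', hpu⟩
    have hcard : ∀ x ∈ T, G.degree x - 1 ≤ (T.filter (fun u => p u = x)).card := by
      intro x hx
      have h1 : ((G.neighborFinset x).erase (p x)).card = G.degree x - 1 := by
        rw [Finset.card_erase_of_mem (by rw [SimpleGraph.mem_neighborFinset]; exact key2 x hx)]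
        rfl
      rw [← h1]
      exact Finset.card_le_card (hsub x hx)
    have hfib : (T.filter (fun u => p u ∈ T)).card
        = ∑ x ∈ T, (T.filter (fun u => p u = x)).card := by
      rw [Finset.card_eq_sum_card_fiberwise (f := p) (s := T.filter (fun u => p u ∈ T)) (t := T)
        (fun u hu => (Finset.mem_filter.mp hu).2)]
      refine Finset.sum_congr rfl (fun x hx => ?_)
      congr 1
      ext u
      simp only [Finset.mem_filter]
      constructor
      · rintro ⟨⟨h1, _⟩, h3⟩; exact ⟨h1, h3⟩
      · rintro ⟨h1, h3⟩; exact ⟨⟨h1, h3 ▸ hx⟩, h3⟩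
    have hsum : ∑ x ∈ T, (G.degree x - 1) ≤ T.card := by
      calc ∑ x ∈ T, (G.degree x - 1) ≤ ∑ x ∈ T, (T.filter (fun u => p u = x)).card :=
            Finset.sum_le_sum hcard
        _ = (T.filter (fun u => p u ∈ T)).card := hfib.symm
        _ ≤ T.card := Finset.card_le_card (Finset.filter_subset _ _)
    have hone : ∀ x ∈ T, 1 ≤ G.degree x - 1 := by
      intro x _
      have := hmin x
      omega
    have hsum2 : T.card ≤ ∑ x ∈ T, (G.degree x - 1) := by
      calc T.card = ∑ _x ∈ T, 1 := by simp
        _ ≤ ∑ x ∈ T, (G.degree x - 1) := Finset.sum_le_sum hone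
    -- p maps T to T
    have hfilter_eq : T.filter (fun u => p u ∈ T) = T := by
      apply Finset.eq_of_subset_of_card_le (Finset.filter_subset _ _)
      calc T.card ≤ ∑ x ∈ T, (G.degree x - 1) := hsum2
        _ ≤ ∑ x ∈ T, (T.filter (fun u => p u = x)).card := Finset.sum_le_sum hcard
        _ = (T.filter (fun u => p u ∈ T)).card := hfib.symm
    have hclosed : ∀ x, x ∈ T → ∀ u, G.Adj x u → u ∈ T := by
      intro x hx u hadj
      by_cases hu : u = p x
      · subst hu
        have hx' : x ∈ T.filter (fun u => p u ∈ T) := by rw [hfilter_eq]; exact hx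
        exact (Finset.mem_filter.mp hx').2
      · exact (key3 x hx u hadj hu).1
    have hTuniv : ∀ v, v ∈ T := by
      intro v
      obtain ⟨w⟩ := hconn.preconnected x₀ v
      exact closed_walk_mem (P := fun v => v ∈ T) hclosed w hx₀
    obtain ⟨r, hr⟩ := hmax
    have hstrict : ∑ _x ∈ T, 1 < ∑ x ∈ T, (G.degree x - 1) := by
      refine Finset.sum_lt_sum hone ⟨r, hTuniv r, ?_⟩
      omega
    simp only [Finset.sum_const, smul_eq_mul, mul_one] at hstrict
    exact absurd (lt_of_lt_of_le hstrict hsum) (lt_irrefl _)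
  -- all vertices with a witness are saturated
  have hallsat : ∀ v, InH G d v → Sat G d v := by
    intro v hIn
    by_contra hs
    have : v ∈ T := by simp [hTdef, hIn, hs]
    rw [hT] at this
    exact absurd this (Finset.notMem_empty v)
  have hInClosed : ∀ x, InH G d x → ∀ u, G.Adj x u → InH G d u := by
    intro x hx u hadj
    have hs := hallsat x hx
    exact ⟨_, sat_out hs hadj, rfl⟩
  have hallIn : ∀ v, InH G d v := by
    intro v
    obtain ⟨w⟩ := hconn.preconnected d.snd v
    exact closed_walk_mem (P := fun v => InH G d v) hInClosed w ⟨d, Relation.ReflTransGen.refl, rfl⟩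
  have hse := hallsat e.fst (hallIn e.fst)
  have := sat_out hse e.adj
  have heq2 : (⟨(e.fst, e.snd), e.adj⟩ : G.Dart) = e := SimpleGraph.Dart.ext _ _ rfl
  rwa [heq2] at this

end StrongConn2
section MatrixFacts

open SimpleGraph Finset

variable {V : Type} [Fintype V] [DecidableEq V] {G : SimpleGraph V} [DecidableRel G.Adj]

lemma step_symm {d e : G.Dart} (h : Step G d e) : Step G e.symm d.symm := by
  obtain ⟨h1, h2⟩ := h
  constructor
  · exact h1.symm
  · intro hcon
    rw [SimpleGraph.Dart.symm_symm] at hcon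
    exact h2 hcon.symm

lemma outdeg_pos (hmin : ∀ v, 2 ≤ G.degree v) (d : G.Dart) : 1 ≤ outdeg G d := by
  have := hmin d.snd
  unfold outdeg
  omega

lemma step_outdeg_eq_indeg {d e : G.Dart} (h : Step G d e) : outdeg G d = indeg G e := by
  unfold outdeg indeg
  rw [h.1]

lemma succs_card (d : G.Dart) :
    (Finset.univ.filter (fun f => Step G d f)).card = outdeg G d := by
  have hset : Finset.univ.filter (fun f => Step G d f)
      = (Finset.univ.filter (fun f : G.Dart => f.fst = d.snd)).erase d.symm := by
    ext f
    simp only [Finset.mem_filter, Finset.mem_erase, Finset.mem_univ, true_and]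
    constructor
    · rintro ⟨h1, h2⟩; exact ⟨h2, h1.symm⟩
    · rintro ⟨h1, h2⟩; exact ⟨h2.symm, h1⟩
  rw [hset, Finset.card_erase_of_mem (by simp [SimpleGraph.Dart.symm])]
  rw [SimpleGraph.dart_fst_fiber_card_eq_degree]
  rfl

lemma preds_card (f : G.Dart) :
    (Finset.univ.filter (fun e => Step G e f)).card = indeg G f := by
  have hbij : (Finset.univ.filter (fun e => Step G e f)).card
      = (Finset.univ.filter (fun e => Step G f.symm e)).card := by
    apply Finset.card_nbij' (i := fun e => e.symm) (j := fun e => e.symm)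
    · intro e he
      simp only [Finset.mem_coe, Finset.mem_filter, Finset.mem_univ, true_and] at he ⊢
      exact step_symm he
    · intro e he
      simp only [Finset.mem_coe, Finset.mem_filter, Finset.mem_univ, true_and] at he ⊢
      have := step_symm he
      rwa [SimpleGraph.Dart.symm_symm] at this
    · intro e _; exact SimpleGraph.Dart.symm_symm e
    · intro e _; exact SimpleGraph.Dart.symm_symm e
  rw [hbij, succs_card]
  unfold outdeg indeg
  rfl

lemma exists_step (hmin : ∀ v, 2 ≤ G.degree v) (d : G.Dart) : ∃ f, Step G d f := by
  have h1 := succs_card (G := G) d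
  have h2 := outdeg_pos hmin d
  have : (Finset.univ.filter (fun f => Step G d f)).Nonempty := by
    rw [← Finset.card_pos, h1]; omega
  obtain ⟨f, hf⟩ := this
  exact ⟨f, (Finset.mem_filter.mp hf).2⟩

lemma row_sum_B (d : G.Dart) : ∑ f, B G d f = (outdeg G d : ℝ) := by
  rw [← succs_card (G := G) d]
  unfold B
  rw [Finset.sum_boole]

lemma B_nonneg (d e : G.Dart) : 0 ≤ B G d e := by
  unfold B; split <;> norm_num

lemma onepB_nonneg (d e : G.Dart) : 0 ≤ (1 + B G) d e := by
  rw [Matrix.add_apply]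
  rcases eq_or_ne d e with rfl | h
  · rw [Matrix.one_apply_eq]; have := B_nonneg (G := G) d d; linarith
  · rw [Matrix.one_apply_ne h, zero_add]; exact B_nonneg d e

lemma onepB_pow_nonneg (N : ℕ) (d e : G.Dart) : 0 ≤ ((1 + B G) ^ N) d e := by
  induction N generalizing d e with
  | zero =>
    rw [pow_zero]
    rcases eq_or_ne d e with rfl | h
    · rw [Matrix.one_apply_eq]; norm_num
    · rw [Matrix.one_apply_ne h]
  | succ n ih =>
    rw [pow_succ, Matrix.mul_apply]
    exact Finset.sum_nonneg fun g _ => mul_nonneg (ih d g) (onepB_nonneg g e)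

lemma onepB_pow_mono (N : ℕ) (d e : G.Dart) :
    ((1 + B G) ^ N) d e ≤ ((1 + B G) ^ (N + 1)) d e := by
  have : (1 + B G) ^ (N + 1) = (1 + B G) ^ N + (1 + B G) ^ N * B G := by
    rw [pow_succ, mul_add, mul_one]
  rw [this, Matrix.add_apply, Matrix.mul_apply]
  have : 0 ≤ ∑ g, ((1 + B G) ^ N) d g * B G g e :=
    Finset.sum_nonneg fun g _ => mul_nonneg (onepB_pow_nonneg N d g) (B_nonneg g e)
  linarith

lemma onepB_pow_mono' {N M : ℕ} (h : N ≤ M) (d e : G.Dart) :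
    ((1 + B G) ^ N) d e ≤ ((1 + B G) ^ M) d e := by
  induction M with
  | zero => rw [Nat.le_zero.mp h]
  | succ n ih =>
    rcases Nat.lt_or_ge N (n + 1) with h' | h'
    · exact le_trans (ih (by omega)) (onepB_pow_mono n d e)
    · have : N = n + 1 := by omega
      subst this; exact le_refl _

lemma pos_of_reach {d e : G.Dart} (h : Relation.ReflTransGen (Step G) d e) : ∃ k : ℕ, 0 < ((1 + B G) ^ k) d e := by
  induction h with
  | refl => exact ⟨0, by rw [pow_zero, Matrix.one_apply_eq]; norm_num⟩
  | @tail b c _ hstep ih =>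
    obtain ⟨k, hk⟩ := ih
    refine ⟨k + 1, ?_⟩
    rw [pow_succ, Matrix.mul_apply]
    have hbc : (0:ℝ) < (1 + B G) b c := by
      rw [Matrix.add_apply]
      have h1 : B G b c = 1 := by unfold B; rw [if_pos hstep]
      rcases eq_or_ne b c with rfl | hne
      · rw [Matrix.one_apply_eq, h1]; norm_num
      · rw [Matrix.one_apply_ne hne, h1]; norm_num
    refine Finset.sum_pos' (fun g _ => mul_nonneg (onepB_pow_nonneg k d g) (onepB_nonneg g c))
      ⟨b, Finset.mem_univ b, mul_pos hk hbc⟩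

lemma exists_N (hconn : G.Connected) (hmin : ∀ v, 2 ≤ G.degree v)
    (hmax : ∃ v, 2 < G.degree v) : ∃ N : ℕ, ∀ d e : G.Dart, 0 < ((1 + B G) ^ N) d e := by
  classical
  have hr : ∀ p : G.Dart × G.Dart, ∃ k : ℕ, 0 < ((1 + B G) ^ k) p.1 p.2 :=
    fun p => pos_of_reach (reach_all hconn hmin hmax p.1 p.2)
  refine ⟨Finset.univ.sup (fun p : G.Dart × G.Dart => (hr p).choose), fun d e => ?_⟩
  have h1 := (hr (d, e)).choose_spec
  have h2 : (hr (d, e)).choose ≤ Finset.univ.sup (fun p : G.Dart × G.Dart => (hr p).choose) :=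
    Finset.le_sup (f := fun p : G.Dart × G.Dart => (hr p).choose) (Finset.mem_univ (d, e))
  exact lt_of_lt_of_le h1 (onepB_pow_mono' h2 d e)

end MatrixFacts
section CW

open SimpleGraph Finset

variable {V : Type} [Fintype V] [DecidableEq V] {G : SimpleGraph V} [DecidableRel G.Adj]

lemma mulVec_nonneg {M : Matrix G.Dart G.Dart ℝ} (hM : ∀ d e, 0 ≤ M d e)
    {u : G.Dart → ℝ} (hu : ∀ e, 0 ≤ u e) (d : G.Dart) : 0 ≤ M.mulVec u d := by
  simp only [Matrix.mulVec, dotProduct]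
  exact Finset.sum_nonneg fun e _ => mul_nonneg (hM d e) (hu e)

lemma mulVec_pos {M : Matrix G.Dart G.Dart ℝ} (hM : ∀ d e, 0 < M d e)
    {u : G.Dart → ℝ} (hu : ∀ e, 0 ≤ u e) (hune : ∃ e, 0 < u e) (d : G.Dart) :
    0 < M.mulVec u d := by
  obtain ⟨e0, he0⟩ := hune
  simp only [Matrix.mulVec, dotProduct]
  exact Finset.sum_pos' (fun e _ => mul_nonneg (hM d e).le (hu e))
    ⟨e0, Finset.mem_univ e0, mul_pos (hM d e0) he0⟩

lemma continuous_mulVec (M : Matrix G.Dart G.Dart ℝ) :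
    Continuous (fun u : G.Dart → ℝ => M.mulVec u) := by
  refine continuous_pi fun d => ?_
  simp only [Matrix.mulVec, dotProduct]
  exact continuous_finset_sum _ fun e _ => continuous_const.mul (continuous_apply e)

theorem exists_pos_eigen (hconn : G.Connected) (hmin : ∀ v, 2 ≤ G.degree v)
    (hmax : ∃ v, 2 < G.degree v) :
    ∃ (r : ℝ) (w : G.Dart → ℝ), (∀ e, 0 < w e) ∧ (B G).mulVec w = r • w := by
  classical
  obtain ⟨N, hN⟩ := exists_N hconn hmin hmax
  set M := (1 + B G) ^ N with hMdef
  obtain ⟨v0, hv0⟩ := hmax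
  have hadj0 : ∃ x, G.Adj v0 x := by
    have hd : 0 < G.degree v0 := by omega
    rw [← SimpleGraph.card_neighborFinset_eq_degree] at hd
    obtain ⟨x, hx⟩ := Finset.card_pos.mp hd
    exact ⟨x, (SimpleGraph.mem_neighborFinset _ _ _).mp hx⟩
  haveI hDne : Nonempty G.Dart := ⟨⟨(v0, hadj0.choose), hadj0.choose_spec⟩⟩
  have huniv : (Finset.univ : Finset G.Dart).Nonempty := Finset.univ_nonempty
  have hcard : (0:ℝ) < (Fintype.card G.Dart : ℝ) := by
    have := Fintype.card_pos (α := G.Dart)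
    exact_mod_cast this
  set Δ : Set (G.Dart → ℝ) := stdSimplex ℝ G.Dart with hΔ
  have hΔne : Δ.Nonempty := by
    refine ⟨fun _ => (Fintype.card G.Dart : ℝ)⁻¹, fun _ => by positivity, ?_⟩
    rw [Finset.sum_const, Finset.card_univ, nsmul_eq_mul]
    field_simp
  set gg : (G.Dart → ℝ) → (G.Dart → ℝ) := fun u => M.mulVec u with hgg
  set K : Set (G.Dart → ℝ) := gg '' Δ with hK
  have hKcomp : IsCompact K := (isCompact_stdSimplex _ _).image (continuous_mulVec M)
  have hKne : K.Nonempty := hΔne.image gg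
  have hupos : ∀ u ∈ Δ, ∃ e, 0 < u e := by
    intro u hu
    by_contra hcon
    push_neg at hcon
    have h0 : ∀ e, u e = 0 := fun e => le_antisymm (hcon e) (hu.1 e)
    have := hu.2
    simp [h0] at this
  have hKpos : ∀ w ∈ K, ∀ e, 0 < w e := by
    rintro w ⟨u, hu, rfl⟩ e
    exact mulVec_pos hN hu.1 (hupos u hu) e
  set f : (G.Dart → ℝ) → ℝ :=
    fun w => Finset.univ.inf' huniv (fun e => (B G).mulVec w e / w e) with hf
  have hfc : ContinuousOn f K := by
    apply ContinuousOn.finset_inf'_apply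
    intro e _
    exact (((continuous_apply e).comp (continuous_mulVec (B G))).continuousOn).div
      ((continuous_apply e).continuousOn) (fun w hw => ne_of_gt (hKpos w hw e))
  obtain ⟨w, hwK, hwmax⟩ := hKcomp.exists_isMaxOn hKne hfc
  set r := f w with hr
  have hwpos := hKpos w hwK
  have hge : ∀ e, r * w e ≤ (B G).mulVec w e := by
    intro e
    have h1 : r ≤ (B G).mulVec w e / w e := Finset.inf'_le _ (Finset.mem_univ e)
    exact (le_div_iff₀ (hwpos e)).mp h1
  refine ⟨r, w, hwpos, ?_⟩
  by_contra hne
  have hz : ∃ e0, r * w e0 < (B G).mulVec w e0 := by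
    by_contra hcon
    push_neg at hcon
    apply hne
    funext e
    exact le_antisymm (hcon e) (hge e)
  obtain ⟨e0, he0⟩ := hz
  set z : G.Dart → ℝ := (B G).mulVec w - r • w with hzdef
  have hznn : ∀ e, 0 ≤ z e := by
    intro e
    simp only [hzdef, Pi.sub_apply, Pi.smul_apply, smul_eq_mul]
    linarith [hge e]
  have hzpos : ∃ e, 0 < z e := by
    refine ⟨e0, ?_⟩
    simp only [hzdef, Pi.sub_apply, Pi.smul_apply, smul_eq_mul]
    linarith
  set c : ℝ := ∑ e, w e with hc
  have hcpos : 0 < c := Finset.sum_pos (fun e _ => hwpos e) huniv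
  have hu' : c⁻¹ • w ∈ Δ := by
    constructor
    · intro e
      exact mul_nonneg (inv_nonneg.mpr hcpos.le) (hwpos e).le
    · simp only [Pi.smul_apply, smul_eq_mul, ← Finset.mul_sum, ← hc]
      field_simp
  set w'' : G.Dart → ℝ := gg (c⁻¹ • w) with hw''
  have hw''K : w'' ∈ K := ⟨c⁻¹ • w, hu', rfl⟩
  have hcomm : B G * M = M * B G := by
    have : Commute (B G) (1 + B G) := (Commute.one_right (B G)).add_right (Commute.refl (B G))
    exact (this.pow_right N).eq
  have hkey : (B G).mulVec w'' - r • w'' = c⁻¹ • M.mulVec z := by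
    have h1 : (B G).mulVec w'' = c⁻¹ • M.mulVec ((B G).mulVec w) := by
      rw [hw'', hgg]
      simp only [Matrix.mulVec_smul]
      rw [Matrix.mulVec_mulVec, hcomm, ← Matrix.mulVec_mulVec]
    have h2 : r • w'' = c⁻¹ • M.mulVec (r • w) := by
      rw [hw'', hgg]
      simp only [Matrix.mulVec_smul, smul_comm r c⁻¹]
    rw [h1, h2, hzdef, ← smul_sub, Matrix.mulVec_sub]
  have hstrict : ∀ e, r * w'' e < (B G).mulVec w'' e := by
    intro e
    have h3 : 0 < (c⁻¹ • M.mulVec z) e := by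
      simp only [Pi.smul_apply, smul_eq_mul]
      exact mul_pos (inv_pos.mpr hcpos) (mulVec_pos hN hznn hzpos e)
    have h4 := congrFun hkey e
    rw [← h4] at h3
    simp only [Pi.sub_apply, Pi.smul_apply, smul_eq_mul] at h3
    linarith
  have hfw'' : r < f w'' := by
    rw [hf]
    rw [Finset.lt_inf'_iff]
    intro e _
    rw [lt_div_iff₀ (hKpos w'' hw''K e)]
    exact hstrict e
  have := hwmax hw''K
  simp only [Set.mem_setOf_eq] at this
  exact absurd (lt_of_lt_of_le hfw'' this) (lt_irrefl _)

end CW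
section Final

open SimpleGraph Finset

variable {V : Type} [Fintype V] [DecidableEq V] {G : SimpleGraph V} [DecidableRel G.Adj]

lemma indeg_pos (hmin : ∀ v, 2 ≤ G.degree v) (d : G.Dart) : 1 ≤ indeg G d := by
  have := hmin d.fst
  unfold indeg
  omega

lemma eigen_le_bound [Nonempty G.Dart] {s : ℝ} {v : G.Dart → ℝ} (hv : v ≠ 0)
    (heig : (B G).mulVec v = s • v) : s ≤ (Fintype.card V : ℝ) := by
  classical
  obtain ⟨e0, _, hmax⟩ := Finset.exists_max_image (Finset.univ : Finset G.Dart)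
    (fun e => |v e|) Finset.univ_nonempty
  have hM : 0 < |v e0| := by
    rcases lt_or_ge 0 (|v e0|) with h | h
    · exact h
    · exfalso
      apply hv
      funext e
      have h1 := hmax e (Finset.mem_univ e)
      have h2 : |v e| ≤ 0 := le_trans h1 h
      have := abs_nonneg (v e)
      have : |v e| = 0 := le_antisymm h2 this
      simpa using abs_eq_zero.mp this
  have hrow := congrFun heig e0
  simp only [Pi.smul_apply, smul_eq_mul] at hrow
  have h1 : |s * v e0| ≤ ∑ f, B G e0 f * |v f| := by
    rw [← hrow]
    simp only [Matrix.mulVec, dotProduct]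
    refine le_trans (Finset.abs_sum_le_sum_abs _ _) (Finset.sum_le_sum fun f _ => ?_)
    rw [abs_mul, abs_of_nonneg (B_nonneg e0 f)]
  have h2 : ∑ f, B G e0 f * |v f| ≤ ∑ f, B G e0 f * |v e0| :=
    Finset.sum_le_sum fun f _ => mul_le_mul_of_nonneg_left (hmax f (Finset.mem_univ f))
      (B_nonneg e0 f)
  have h3 : ∑ f, B G e0 f * |v e0| = (outdeg G e0 : ℝ) * |v e0| := by
    rw [← Finset.sum_mul, row_sum_B]
  have h4 : (outdeg G e0 : ℝ) ≤ (Fintype.card V : ℝ) := by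
    have h5 : outdeg G e0 ≤ Fintype.card V := by
      have := SimpleGraph.degree_lt_card_verts (G := G) e0.snd
      unfold outdeg
      omega
    exact_mod_cast h5
  have habs : |s| * |v e0| ≤ (Fintype.card V : ℝ) * |v e0| := by
    rw [← abs_mul]
    calc |s * v e0| ≤ ∑ f, B G e0 f * |v f| := h1
      _ ≤ ∑ f, B G e0 f * |v e0| := h2
      _ = (outdeg G e0 : ℝ) * |v e0| := h3
      _ ≤ (Fintype.card V : ℝ) * |v e0| := by
          exact mul_le_mul_of_nonneg_right h4 hM.le
  have := le_of_mul_le_mul_right habs hM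
  calc s ≤ |s| := le_abs_self s
    _ ≤ (Fintype.card V : ℝ) := this

end Final
/-- `ρ(G) = Λ(G)` implies the cycle condition. -/
theorem rho_eq_Lambda_implies_cycle (h : NBIrreducible G)
    (heq : perron (B G) = Lambda G) : CycleCondition G := by
  classical
  obtain ⟨hconn, hmin, hmaxd⟩ := h
  obtain ⟨r, x, hxpos, heig⟩ := exists_pos_eigen hconn hmin hmaxd
  -- nonempty darts
  haveI hDne : Nonempty G.Dart := by
    obtain ⟨v0, hv0⟩ := hmaxd
    have hd : 0 < G.degree v0 := by omega
    rw [← SimpleGraph.card_neighborFinset_eq_degree] at hd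
    obtain ⟨y, hy⟩ := Finset.card_pos.mp hd
    exact ⟨⟨(v0, y), (SimpleGraph.mem_neighborFinset _ _ _).mp hy⟩⟩
  have hm : 0 < Fintype.card G.Dart := Fintype.card_pos
  have houtpos : ∀ d : G.Dart, (0:ℝ) < (outdeg G d : ℝ) := by
    intro d
    have := outdeg_pos hmin d
    exact_mod_cast (by omega : 0 < outdeg G d)
  have hProdpos : 0 < ∏ d : G.Dart, (outdeg G d : ℝ) :=
    Finset.prod_pos fun d _ => houtpos d
  have hLpos : 0 < Lambda G := Real.rpow_pos_of_pos hProdpos _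
  have hLm : Lambda G ^ (Fintype.card G.Dart) = ∏ d : G.Dart, (outdeg G d : ℝ) := by
    rw [Lambda, ← Real.rpow_natCast ((∏ d : G.Dart, (outdeg G d : ℝ)) ^
      ((Fintype.card G.Dart : ℝ)⁻¹)) (Fintype.card G.Dart), ← Real.rpow_mul hProdpos.le]
    rw [inv_mul_cancel₀ (by exact_mod_cast hm.ne')]
    exact Real.rpow_one _
  have hxne : x ≠ 0 := by
    intro h0
    obtain ⟨e⟩ := hDne
    have := hxpos e
    rw [h0] at this
    simp at this
  -- r is at most the Perron value, hence at most Lambda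
  have hrle : r ≤ Lambda G := by
    rw [← heq]
    unfold perron
    apply le_csSup
    · refine ⟨(Fintype.card V : ℝ), ?_⟩
      rintro s ⟨v, hv, hveig⟩
      exact eigen_le_bound hv hveig
    · exact ⟨x, hxne, heig⟩
  -- eigen-equation, summed over successors
  have heigen : ∀ e : G.Dart,
      ∑ f ∈ Finset.univ.filter (fun f => Step G e f), x f = r * x e := by
    intro e
    have h1 : (B G).mulVec x e = ∑ f ∈ Finset.univ.filter (fun f => Step G e f), x f := by
      simp only [Matrix.mulVec, dotProduct, B, ite_mul, one_mul, zero_mul]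
      rw [← Finset.sum_filter]
    have h2 := congrFun heig e
    simp only [Pi.smul_apply, smul_eq_mul] at h2
    rw [← h1, h2]
  have hSne : ∀ e : G.Dart, (Finset.univ.filter (fun f => Step G e f)).Nonempty := by
    intro e
    rw [← Finset.card_pos, succs_card]
    have := outdeg_pos hmin e
    omega
  have hrpos : 0 < r := by
    obtain ⟨e⟩ := hDne
    have h1 : 0 < ∑ f ∈ Finset.univ.filter (fun f => Step G e f), x f :=
      Finset.sum_pos (fun f _ => hxpos f) (hSne e)
    rw [heigen e] at h1
    nlinarith [hxpos e]
  -- per-dart Jensen inequality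
  have hwsum : ∀ e : G.Dart,
      ∑ _f ∈ Finset.univ.filter (fun f => Step G e f), (outdeg G e : ℝ)⁻¹ = 1 := by
    intro e
    rw [Finset.sum_const, succs_card, nsmul_eq_mul]
    exact mul_inv_cancel₀ (ne_of_gt (houtpos e))
  have hJ : ∀ e : G.Dart,
      Real.log (outdeg G e) + (outdeg G e : ℝ)⁻¹ *
        ∑ f ∈ Finset.univ.filter (fun f => Step G e f), Real.log (x f)
      ≤ Real.log r + Real.log (x e) := by
    intro e
    have hjen := (strictConcaveOn_log_Ioi.concaveOn).le_map_sum
      (t := Finset.univ.filter (fun f => Step G e f)) (w := fun _ => (outdeg G e : ℝ)⁻¹)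
      (p := x) (fun i _ => by positivity) (hwsum e)
      (fun i _ => Set.mem_Ioi.mpr (hxpos i))
    simp only [smul_eq_mul] at hjen
    rw [← Finset.mul_sum, ← Finset.mul_sum, heigen e] at hjen
    have hlog : Real.log ((outdeg G e : ℝ)⁻¹ * (r * x e))
        = -Real.log (outdeg G e) + (Real.log r + Real.log (x e)) := by
      rw [Real.log_mul (inv_ne_zero (ne_of_gt (houtpos e)))
        (ne_of_gt (mul_pos hrpos (hxpos e))), Real.log_inv,
        Real.log_mul (ne_of_gt hrpos) (ne_of_gt (hxpos e))]
    rw [hlog] at hjen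
    linarith
  -- the column sums of the transition weights are 1
  have hswap : ∑ e : G.Dart, (outdeg G e : ℝ)⁻¹ *
      ∑ f ∈ Finset.univ.filter (fun f => Step G e f), Real.log (x f)
      = ∑ f : G.Dart, Real.log (x f) := by
    have h1 : ∀ e : G.Dart, (outdeg G e : ℝ)⁻¹ *
        ∑ f ∈ Finset.univ.filter (fun f => Step G e f), Real.log (x f)
        = ∑ f : G.Dart, (if Step G e f then (outdeg G e : ℝ)⁻¹ * Real.log (x f) else 0) := by
      intro e
      rw [Finset.mul_sum, ← Finset.sum_filter]
    rw [Finset.sum_congr rfl (fun e _ => h1 e), Finset.sum_comm]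
    refine Finset.sum_congr rfl (fun f _ => ?_)
    rw [← Finset.sum_filter]
    have h2 : ∑ e ∈ Finset.univ.filter (fun e => Step G e f), (outdeg G e : ℝ)⁻¹ * Real.log (x f)
        = ∑ e ∈ Finset.univ.filter (fun e => Step G e f), (indeg G f : ℝ)⁻¹ * Real.log (x f) := by
      refine Finset.sum_congr rfl (fun e he => ?_)
      rw [step_outdeg_eq_indeg (Finset.mem_filter.mp he).2]
    have hind : (0:ℝ) < (indeg G f : ℝ) := by
      have := indeg_pos hmin f
      exact_mod_cast (by omega : 0 < indeg G f)
    rw [h2, Finset.sum_const, preds_card, nsmul_eq_mul, ← mul_assoc,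
      mul_inv_cancel₀ (ne_of_gt hind), one_mul]
  have hlogprod : ∑ e : G.Dart, Real.log (outdeg G e)
      = (Fintype.card G.Dart : ℝ) * Real.log (Lambda G) := by
    rw [← Real.log_pow, hLm, ← Real.log_prod (fun e _ => ne_of_gt (houtpos e))]
  -- summing Jensen gives Λ ≤ r
  have hsumJ : (Fintype.card G.Dart : ℝ) * Real.log (Lambda G) + ∑ f : G.Dart, Real.log (x f)
      ≤ (Fintype.card G.Dart : ℝ) * Real.log r + ∑ e : G.Dart, Real.log (x e) := by
    have := Finset.sum_le_sum (fun e (_ : e ∈ Finset.univ) => hJ e)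
    rw [Finset.sum_add_distrib, Finset.sum_add_distrib, hswap, hlogprod,
      Finset.sum_const, Finset.card_univ, nsmul_eq_mul] at this
    linarith
  have hler : Lambda G ≤ r := by
    have hmr : (0:ℝ) < (Fintype.card G.Dart : ℝ) := by exact_mod_cast hm
    have hlog : Real.log (Lambda G) ≤ Real.log r := by
      have := hsumJ
      nlinarith
    exact (Real.log_le_log_iff hLpos hrpos).mp hlog
  have hreq : r = Lambda G := le_antisymm hrle hler
  -- equality forcing: x is constant on successors
  have hconst : ∀ e : G.Dart, ∀ f ∈ Finset.univ.filter (fun f => Step G e f),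
      ∀ f' ∈ Finset.univ.filter (fun f => Step G e f), x f = x f' := by
    by_contra hcon
    push_neg at hcon
    obtain ⟨e0, f0, hf0, f0', hf0', hne0⟩ := hcon
    have hJs : Real.log (outdeg G e0) + (outdeg G e0 : ℝ)⁻¹ *
        ∑ f ∈ Finset.univ.filter (fun f => Step G e0 f), Real.log (x f)
        < Real.log r + Real.log (x e0) := by
      have hjen := strictConcaveOn_log_Ioi.lt_map_sum
        (t := Finset.univ.filter (fun f => Step G e0 f))
        (w := fun _ => (outdeg G e0 : ℝ)⁻¹) (p := x) (fun i _ => inv_pos.mpr (houtpos e0))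
        (hwsum e0)
        (fun i _ => Set.mem_Ioi.mpr (hxpos i)) ⟨f0, hf0, f0', hf0', hne0⟩
      simp only [smul_eq_mul] at hjen
      rw [← Finset.mul_sum, ← Finset.mul_sum, heigen e0] at hjen
      have hlog : Real.log ((outdeg G e0 : ℝ)⁻¹ * (r * x e0))
          = -Real.log (outdeg G e0) + (Real.log r + Real.log (x e0)) := by
        rw [Real.log_mul (inv_ne_zero (ne_of_gt (houtpos e0)))
          (ne_of_gt (mul_pos hrpos (hxpos e0))), Real.log_inv,
          Real.log_mul (ne_of_gt hrpos) (ne_of_gt (hxpos e0))]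
      rw [hlog] at hjen
      linarith
    have hstrict : (Fintype.card G.Dart : ℝ) * Real.log (Lambda G) + ∑ f : G.Dart, Real.log (x f)
        < (Fintype.card G.Dart : ℝ) * Real.log r + ∑ e : G.Dart, Real.log (x e) := by
      have := Finset.sum_lt_sum (fun e (_ : e ∈ Finset.univ) => hJ e)
        ⟨e0, Finset.mem_univ e0, hJs⟩
      rw [Finset.sum_add_distrib, Finset.sum_add_distrib, hswap, hlogprod,
        Finset.sum_const, Finset.card_univ, nsmul_eq_mul] at this
      linarith
    rw [hreq] at hstrict
    linarith
  -- the key step identity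
  have hstep : ∀ e f : G.Dart, Step G e f → (outdeg G e : ℝ) * x f = r * x e := by
    intro e f hef
    have hfS : f ∈ Finset.univ.filter (fun f => Step G e f) :=
      Finset.mem_filter.mpr ⟨Finset.mem_univ f, hef⟩
    have h1 : ∑ f' ∈ Finset.univ.filter (fun f => Step G e f), x f'
        = (outdeg G e : ℝ) * x f := by
      rw [Finset.sum_congr rfl (fun f' hf' => hconst e f' hf' f hfS), Finset.sum_const,
        succs_card, nsmul_eq_mul]
    rw [← h1, heigen e]
  -- conclude the cycle condition
  intro n C hC
  have hCi : ∀ i : Fin (n + 1), (outdeg G (C i) : ℝ) = r * x (C i) / x (C (i + 1)) := by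
    intro i
    have h1 := hstep (C i) (C (i + 1)) (hC i)
    rw [eq_div_iff (ne_of_gt (hxpos (C (i + 1))))]
    linarith [h1]
  calc ∏ i : Fin (n + 1), (outdeg G (C i) : ℝ)
      = ∏ i : Fin (n + 1), (r * x (C i) / x (C (i + 1))) :=
        Finset.prod_congr rfl (fun i _ => hCi i)
    _ = (∏ i : Fin (n + 1), (r * x (C i))) / ∏ i : Fin (n + 1), x (C (i + 1)) :=
        Finset.prod_div_distrib _ _
    _ = (r ^ (n + 1) * ∏ i : Fin (n + 1), x (C i)) / ∏ i : Fin (n + 1), x (C i) := by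
        rw [Finset.prod_mul_distrib, Finset.prod_const, Finset.card_univ, Fintype.card_fin]
        congr 1
        exact Equiv.prod_comp (Equiv.addRight (1 : Fin (n + 1))) (fun i => x (C i))
    _ = r ^ (n + 1) := by
        rw [mul_div_assoc, div_self (ne_of_gt (Finset.prod_pos fun i _ => hxpos (C i))),
          mul_one]
    _ = Lambda G ^ (n + 1) := by rw [hreq]
end NB
end

section
/- If G is an NB-irreducible graph with ρ(G) = Λ(G) and G has no vertices of degree two, then G is either a regular graph or a bipartite bi-regular graph (a bipartite graph in which all vertices on each side of the bipartition have the same degree). -/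
open Finset Filter

set_option linter.unusedSectionVars false
namespace NB

variable {V : Type} [Fintype V] [DecidableEq V] (G : SimpleGraph V) [DecidableRel G.Adj]

/-! ### Auxiliary machinery for the proof -/

section Aux

variable {V : Type} [Fintype V] [DecidableEq V] (G : SimpleGraph V) [DecidableRel G.Adj]

/-- Sum of `z` over the neighbors of `a`. -/
def nbrSum (z : V → ℝ) (a : V) : ℝ := ∑ b ∈ G.neighborFinset a, z b

/-- `deg - 1` as a real number. -/
def Qr (a : V) : ℝ := (G.degree a : ℝ) - 1

/-- The quadratic form of the Ihara pencil `l² I - l A + (D - I)`. -/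
def quadF (l : ℝ) (y : V → ℝ) : ℝ :=
  l ^ 2 * (∑ a, y a ^ 2) + (∑ a, Qr G a * y a ^ 2) - l * ∑ a, y a * nbrSum G y a

/-- Membership in the kernel of the Ihara pencil. -/
def PencilKer (l : ℝ) (z : V → ℝ) : Prop :=
  ∀ a, l ^ 2 * z a + Qr G a * z a = l * nbrSum G z a

lemma sum_fiber_snd (z : V → ℝ) (v : V) :
    ∑ f ∈ Finset.univ.filter (fun f : G.Dart => f.fst = v), z f.snd = nbrSum G z v := by
  classical
  refine Finset.sum_bij' (fun f _ => f.snd) (fun b hb => SimpleGraph.Dart.mk (v, b)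
    (by simpa using hb)) ?_ ?_ ?_ ?_ ?_
  · intro f hf
    simp only [Finset.mem_filter, Finset.mem_univ, true_and] at hf
    simpa [SimpleGraph.mem_neighborFinset] using hf ▸ f.adj
  · intro b hb; simp
  · intro f hf
    simp only [Finset.mem_filter, Finset.mem_univ, true_and] at hf
    cases f with
    | mk p hp => cases p; cases hf; rfl
  · intro b hb; rfl
  · intro f hf; rfl

lemma card_fiber_fst (v : V) :
    (Finset.univ.filter (fun f : G.Dart => f.fst = v)).card = G.degree v :=
  G.dart_fst_fiber_card_eq_degree v

lemma dart_symm_fst (e : G.Dart) : e.symm.fst = e.snd := rfl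
lemma dart_symm_snd (e : G.Dart) : e.symm.snd = e.fst := rfl

lemma step_iff (e f : G.Dart) : Step G e f ↔ f.fst = e.snd ∧ f ≠ e.symm := by
  unfold Step; rw [eq_comm]

lemma out_eq (e : G.Dart) :
    Finset.univ.filter (Step G e) =
      (Finset.univ.filter (fun f : G.Dart => f.fst = e.snd)).erase e.symm := by
  ext f
  simp only [Finset.mem_filter, Finset.mem_univ, true_and, Finset.mem_erase, step_iff]
  tauto

lemma symm_mem_fiber (e : G.Dart) :
    e.symm ∈ Finset.univ.filter (fun f : G.Dart => f.fst = e.snd) := by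
  simp [dart_symm_fst]

lemma card_out (e : G.Dart) :
    (Finset.univ.filter (Step G e)).card = G.degree e.snd - 1 := by
  rw [out_eq, Finset.card_erase_of_mem (symm_mem_fiber G e), card_fiber_fst]

lemma sum_out (x : G.Dart → ℝ) (e : G.Dart) :
    ∑ f ∈ Finset.univ.filter (Step G e), x f =
      (∑ f ∈ Finset.univ.filter (fun f : G.Dart => f.fst = e.snd), x f) - x e.symm := by
  rw [out_eq, Finset.sum_erase_eq_sub (symm_mem_fiber G e)]

lemma mulVec_B_apply (x : G.Dart → ℝ) (e : G.Dart) :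
    (B G).mulVec x e = ∑ f ∈ Finset.univ.filter (Step G e), x f := by
  simp [B, Matrix.mulVec, dotProduct, ite_mul, one_mul, zero_mul, Finset.sum_filter]

lemma dart_symm_symm (e : G.Dart) : e.symm.symm = e := by
  cases e with | mk p hp => cases p; rfl

lemma in_eq (f : G.Dart) :
    Finset.univ.filter (fun e => Step G e f) =
      (Finset.univ.filter (fun e : G.Dart => e.snd = f.fst)).erase f.symm := by
  ext e
  simp only [Finset.mem_filter, Finset.mem_univ, true_and, Finset.mem_erase]
  unfold Step
  constructor
  · rintro ⟨h1, h2⟩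
    refine ⟨fun hef => h2 ?_, h1⟩
    rw [hef, dart_symm_symm]
  · rintro ⟨h1, h2⟩
    refine ⟨h2, fun hef => h1 ?_⟩
    rw [hef, dart_symm_symm]

lemma card_fiber_snd (v : V) :
    (Finset.univ.filter (fun f : G.Dart => f.snd = v)).card = G.degree v := by
  have himg : Finset.univ.filter (fun f : G.Dart => f.snd = v)
      = (Finset.univ.filter (fun f : G.Dart => f.fst = v)).image SimpleGraph.Dart.symm := by
    ext f
    simp only [Finset.mem_filter, Finset.mem_univ, true_and, Finset.mem_image]
    constructor
    · intro hf
      exact ⟨f.symm, by rw [dart_symm_fst, hf], dart_symm_symm G f⟩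
    · rintro ⟨g, hg, rfl⟩
      rw [dart_symm_snd, hg]
  rw [himg, Finset.card_image_of_injective _ (Function.Involutive.injective (dart_symm_symm G)),
    card_fiber_fst]

lemma symm_mem_fiber_snd (f : G.Dart) :
    f.symm ∈ Finset.univ.filter (fun e : G.Dart => e.snd = f.fst) := by
  simp [dart_symm_snd]

lemma card_in (f : G.Dart) :
    (Finset.univ.filter (fun e => Step G e f)).card = G.degree f.fst - 1 := by
  rw [in_eq, Finset.card_erase_of_mem (symm_mem_fiber_snd G f), card_fiber_snd]

lemma nbrSum_lin (z w : V → ℝ) (t : ℝ) (a : V) :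
    nbrSum G (fun b => z b + t * w b) a = nbrSum G z a + t * nbrSum G w a := by
  simp [nbrSum, Finset.sum_add_distrib, Finset.mul_sum]

/-- Polarization term of the pencil quadratic form. -/
def crossF (l : ℝ) (z w : V → ℝ) : ℝ :=
  2 * l ^ 2 * (∑ a, z a * w a) + 2 * (∑ a, Qr G a * (z a * w a)) -
    l * ((∑ a, z a * nbrSum G w a) + (∑ a, w a * nbrSum G z a))

lemma quadF_expand (l t : ℝ) (z w : V → ℝ) :
    quadF G l (fun a => z a + t * w a)
      = quadF G l z + t * crossF G l z w + t ^ 2 * quadF G l w := by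
  have h1 : ∑ a, (z a + t * w a) ^ 2
      = (∑ a, z a ^ 2) + t * (2 * ∑ a, z a * w a) + t ^ 2 * ∑ a, w a ^ 2 := by
    rw [Finset.mul_sum, Finset.mul_sum, Finset.mul_sum, ← Finset.sum_add_distrib,
      ← Finset.sum_add_distrib]
    exact Finset.sum_congr rfl fun a _ => by ring
  have h2 : ∑ a, Qr G a * (z a + t * w a) ^ 2
      = (∑ a, Qr G a * z a ^ 2) + t * (2 * ∑ a, Qr G a * (z a * w a))
        + t ^ 2 * ∑ a, Qr G a * w a ^ 2 := by
    rw [Finset.mul_sum, Finset.mul_sum, Finset.mul_sum, ← Finset.sum_add_distrib,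
      ← Finset.sum_add_distrib]
    exact Finset.sum_congr rfl fun a _ => by ring
  have h3 : ∑ a, (z a + t * w a) * nbrSum G (fun b => z b + t * w b) a
      = (∑ a, z a * nbrSum G z a) + t * (∑ a, z a * nbrSum G w a)
        + t * (∑ a, w a * nbrSum G z a) + t ^ 2 * ∑ a, w a * nbrSum G w a := by
    rw [Finset.mul_sum, Finset.mul_sum, Finset.mul_sum, ← Finset.sum_add_distrib,
      ← Finset.sum_add_distrib, ← Finset.sum_add_distrib]
    refine Finset.sum_congr rfl fun a _ => ?_
    rw [nbrSum_lin]
    ring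
  unfold quadF crossF
  rw [h1, h2, h3]
  ring

lemma quadF_smul (l c : ℝ) (y : V → ℝ) :
    quadF G l (fun a => c * y a) = c ^ 2 * quadF G l y := by
  have h := quadF_expand G l c (fun _ => (0:ℝ)) y
  have h0 : quadF G l (fun _ => (0:ℝ)) = 0 := by simp [quadF, nbrSum]
  have hc : crossF G l (fun _ => (0:ℝ)) y = 0 := by simp [crossF, nbrSum]
  simpa [h0, hc] using h

lemma pencil_quadF_zero {l : ℝ} {z : V → ℝ} (hp : PencilKer G l z) :
    quadF G l z = 0 := by
  have h : quadF G l z = ∑ a, (l ^ 2 * z a + Qr G a * z a - l * nbrSum G z a) * z a := by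
    unfold quadF
    rw [Finset.mul_sum, Finset.mul_sum, ← Finset.sum_add_distrib, ← Finset.sum_sub_distrib]
    exact Finset.sum_congr rfl fun a _ => by ring
  rw [h]
  apply Finset.sum_eq_zero
  intro a _
  rw [hp a]
  ring

lemma cross_zero_of_nonneg {c q : ℝ} (hq : 0 ≤ q) (h : ∀ t : ℝ, 0 ≤ t * c + t ^ 2 * q) :
    c = 0 := by
  rcases eq_or_lt_of_le hq with hq0 | hq0
  · have h1 := h 1
    have h2 := h (-1)
    rw [← hq0] at h1 h2
    norm_num at h1 h2
    linarith
  · have ht := h (-(c / (2 * q)))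
    have hexp : (-(c / (2 * q))) * c + (-(c / (2 * q))) ^ 2 * q = -(c ^ 2) / (4 * q) := by
      field_simp
      ring
    rw [hexp] at ht
    have hc2 : c ^ 2 ≤ 0 := by
      rcases div_nonneg_iff.mp ht with ⟨h1, _⟩ | ⟨_, h2⟩
      · linarith
      · linarith
    have hc0 : c ^ 2 = 0 := le_antisymm hc2 (sq_nonneg c)
    exact pow_eq_zero_iff two_ne_zero |>.mp hc0

lemma pencil_of_psd {l : ℝ} {z : V → ℝ} (hpsd : ∀ w, 0 ≤ quadF G l w)
    (hz : quadF G l z = 0) : PencilKer G l z := by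
  intro a
  classical
  set δ : V → ℝ := fun b => if b = a then (1:ℝ) else 0 with hδ
  have hcross : crossF G l z δ = 0 := by
    apply cross_zero_of_nonneg (hpsd δ)
    intro t
    have h := hpsd (fun b => z b + t * δ b)
    rwa [quadF_expand, hz, zero_add] at h
  have e1 : ∑ b, z b * δ b = z a := by
    simp [hδ, mul_ite, mul_one, mul_zero, Finset.sum_ite_eq']
  have e2 : ∑ b, Qr G b * (z b * δ b) = Qr G a * z a := by
    simp [hδ, mul_ite, mul_one, mul_zero, Finset.sum_ite_eq', mul_assoc]
  have e3 : ∀ b, nbrSum G δ b = if b ∈ G.neighborFinset a then (1:ℝ) else 0 := by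
    intro b
    have : nbrSum G δ b = if a ∈ G.neighborFinset b then (1:ℝ) else 0 := by
      simp [nbrSum, hδ, Finset.sum_ite_eq']
    rw [this]
    congr 1
    simp only [SimpleGraph.mem_neighborFinset, eq_iff_iff]
    exact ⟨fun h => h.symm, fun h => h.symm⟩
  have e4 : ∑ b, z b * nbrSum G δ b = nbrSum G z a := by
    have hterm : ∀ b, z b * nbrSum G δ b = if b ∈ G.neighborFinset a then z b else 0 := by
      intro b
      rw [e3 b]
      by_cases hb : b ∈ G.neighborFinset a
      · rw [if_pos hb, if_pos hb, mul_one]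
      · rw [if_neg hb, if_neg hb, mul_zero]
    rw [Finset.sum_congr rfl fun b _ => hterm b, Finset.sum_ite_mem, Finset.univ_inter]
    rfl
  have e5 : ∑ b, δ b * nbrSum G z b = nbrSum G z a := by
    simp [hδ, ite_mul, one_mul, zero_mul, Finset.sum_ite_eq']
  unfold crossF at hcross
  rw [e1, e2, e4, e5] at hcross
  linarith

lemma quadF_abs_le {l : ℝ} (hl : 0 ≤ l) (y : V → ℝ) :
    quadF G l (fun a => |y a|) ≤ quadF G l y := by
  have h1 : ∑ a, |y a| ^ 2 = ∑ a, y a ^ 2 := by simp [sq_abs]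
  have h2 : ∑ a, Qr G a * |y a| ^ 2 = ∑ a, Qr G a * y a ^ 2 := by simp [sq_abs]
  have h3 : ∑ a, y a * nbrSum G y a ≤ ∑ a, |y a| * nbrSum G (fun b => |y b|) a := by
    apply Finset.sum_le_sum
    intro a _
    calc y a * nbrSum G y a ≤ |y a * nbrSum G y a| := le_abs_self _
      _ = |y a| * |nbrSum G y a| := abs_mul _ _
      _ ≤ |y a| * nbrSum G (fun b => |y b|) a := by
          apply mul_le_mul_of_nonneg_left _ (abs_nonneg _)
          exact Finset.abs_sum_le_sum_abs _ _
  unfold quadF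
  rw [h1, h2]
  have h4 := mul_le_mul_of_nonneg_left h3 hl
  linarith

lemma pencil_pos (hconn : G.Connected) {l : ℝ} (hl : 0 < l) {z : V → ℝ}
    (hz0 : ∀ a, 0 ≤ z a) (hzne : z ≠ 0) (hp : PencilKer G l z) : ∀ a, 0 < z a := by
  have hstep : ∀ a b, z a = 0 → G.Adj a b → z b = 0 := by
    intro a b ha hab
    have h := hp a
    rw [ha, mul_zero, mul_zero, add_zero] at h
    have hsum : nbrSum G z a = 0 :=
      (mul_eq_zero.mp h.symm).resolve_left (ne_of_gt hl)
    have hall := (Finset.sum_eq_zero_iff_of_nonneg (fun c _ => hz0 c)).mp hsum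
    exact hall b (by simpa [SimpleGraph.mem_neighborFinset] using hab)
  obtain ⟨a0, ha0⟩ : ∃ a, z a ≠ 0 := by
    by_contra hza; push_neg at hza; exact hzne (funext fun a => hza a)
  intro a
  rcases (hz0 a).lt_or_eq with h | h
  · exact h
  · exfalso
    have key : ∀ {u w : V} (_ : G.Walk u w), z u = 0 → z w = 0 := by
      intro u w p
      induction p with
      | nil => exact id
      | cons hadj _ ih => intro hu; exact ih (hstep _ _ hu hadj)
    obtain ⟨p⟩ := hconn.preconnected a a0
    exact ha0 (key p h.symm)

lemma pencil_toEigen {l : ℝ} {z : V → ℝ} (hp : PencilKer G l z) :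
    (B G).mulVec (fun f => l * z f.snd - z f.fst) =
      l • (fun f => l * z f.snd - z f.fst) := by
  funext e
  rw [mulVec_B_apply, sum_out]
  have hsum : ∑ f ∈ Finset.univ.filter (fun f : G.Dart => f.fst = e.snd),
      (l * z f.snd - z f.fst)
      = l * nbrSum G z e.snd - (G.degree e.snd : ℝ) * z e.snd := by
    rw [Finset.sum_sub_distrib]
    congr 1
    · rw [← Finset.mul_sum, sum_fiber_snd]
    · have hconst : ∀ f ∈ Finset.univ.filter (fun f : G.Dart => f.fst = e.snd),
          z f.fst = z e.snd := by
        intro f hf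
        rw [(Finset.mem_filter.mp hf).2]
      rw [Finset.sum_congr rfl hconst, Finset.sum_const, card_fiber_fst, nsmul_eq_mul]
  rw [hsum, dart_symm_fst, dart_symm_snd]
  have hb := hp e.snd
  simp only [Pi.smul_apply, smul_eq_mul, Qr] at hb ⊢
  nlinarith [hb]

lemma x_pos (hdeg : ∀ v, 3 ≤ G.degree v) {l : ℝ} (hl : 2 ≤ l) {z : V → ℝ}
    (hz : ∀ a, 0 < z a) (hp : PencilKer G l z) :
    ∀ e : G.Dart, 0 < l * z e.snd - z e.fst := by
  classical
  by_contra hcon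
  push_neg at hcon
  obtain ⟨e0, he0⟩ := hcon
  set P : Finset G.Dart := Finset.univ.filter (fun e => l * z e.snd ≤ z e.fst) with hP
  have hPne : P.Nonempty := ⟨e0, by simp only [hP, Finset.mem_filter, Finset.mem_univ, true_and]; linarith⟩
  obtain ⟨e, heP, hmin⟩ := Finset.exists_min_image P (fun e => z e.snd) hPne
  have heP' : l * z e.snd ≤ z e.fst := by
    simpa only [hP, Finset.mem_filter, Finset.mem_univ, true_and] using heP
  have hab : G.Adj e.fst e.snd := e.adj
  have hmem : e.fst ∈ G.neighborFinset e.snd := by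
    simp [SimpleGraph.mem_neighborFinset, hab.symm]
  have hl0 : (0:ℝ) ≤ l := by linarith
  have hpb := hp e.snd
  have hsplit : nbrSum G z e.snd
      = z e.fst + ∑ c ∈ (G.neighborFinset e.snd).erase e.fst, z c := by
    rw [nbrSum, ← Finset.add_sum_erase _ _ hmem]
  have hsum_le : l * ∑ c ∈ (G.neighborFinset e.snd).erase e.fst, z c
      ≤ Qr G e.snd * z e.snd := by
    have h1 : l * (l * z e.snd) ≤ l * z e.fst := mul_le_mul_of_nonneg_left heP' hl0
    have h2 : l * nbrSum G z e.snd
        = l * z e.fst + l * ∑ c ∈ (G.neighborFinset e.snd).erase e.fst, z c := by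
      rw [hsplit]; ring
    nlinarith [hpb]
  have hcard : ((G.neighborFinset e.snd).erase e.fst).card = G.degree e.snd - 1 := by
    rw [Finset.card_erase_of_mem hmem, G.card_neighborFinset_eq_degree]
  have hne : ((G.neighborFinset e.snd).erase e.fst).Nonempty := by
    rw [← Finset.card_pos, hcard]
    have := hdeg e.snd; omega
  have hex : ∃ c ∈ (G.neighborFinset e.snd).erase e.fst, l * z c ≤ z e.snd := by
    by_contra hno
    push_neg at hno
    have hlt : ∑ _c ∈ (G.neighborFinset e.snd).erase e.fst, z e.snd
        < ∑ c ∈ (G.neighborFinset e.snd).erase e.fst, l * z c :=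
      Finset.sum_lt_sum_of_nonempty hne (fun c hc => hno c hc)
    rw [Finset.sum_const, ← Finset.mul_sum, hcard, nsmul_eq_mul] at hlt
    have hQ : ((G.degree e.snd - 1 : ℕ) : ℝ) = Qr G e.snd := by
      have h3 := hdeg e.snd
      rw [Qr]
      push_cast [Nat.cast_sub (by omega : 1 ≤ G.degree e.snd)]
      ring
    rw [hQ] at hlt
    linarith
  obtain ⟨c, hc, hzc⟩ := hex
  have hcb : G.Adj e.snd c := by
    simpa [SimpleGraph.mem_neighborFinset] using Finset.mem_of_mem_erase hc
  have he1P : (⟨(e.snd, c), hcb⟩ : G.Dart) ∈ P := by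
    simp only [hP, Finset.mem_filter, Finset.mem_univ, true_and]
    exact hzc
  have hlt2 : z c < z e.snd := by nlinarith [hz c]
  have := hmin _ he1P
  simp only at this
  linarith

lemma eigen_le_perron (hD : Nonempty G.Dart) {r : ℝ} {v : G.Dart → ℝ} (hv : v ≠ 0)
    (he : (B G).mulVec v = r • v) : r ≤ perron (B G) := by
  apply le_csSup
  · refine ⟨(Fintype.card G.Dart : ℝ), ?_⟩
    rintro s ⟨w, hw, hws⟩
    obtain ⟨e0, -, hmax⟩ := Finset.exists_max_image Finset.univ (fun e => |w e|)
      ⟨hD.some, Finset.mem_univ _⟩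
    have hw0 : 0 < |w e0| := by
      obtain ⟨f, hf⟩ : ∃ f, w f ≠ 0 := by
        by_contra hc; push_neg at hc; exact hw (funext hc)
      exact lt_of_lt_of_le (abs_pos.mpr hf) (hmax f (Finset.mem_univ f))
    have hrow : s * w e0 = ∑ f ∈ Finset.univ.filter (Step G e0), w f := by
      have h := congrFun hws e0
      rw [mulVec_B_apply] at h
      simpa [Pi.smul_apply, smul_eq_mul] using h.symm
    have habs : |s| * |w e0| ≤ (Fintype.card G.Dart : ℝ) * |w e0| := by
      calc |s| * |w e0| = |s * w e0| := (abs_mul _ _).symm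
        _ = |∑ f ∈ Finset.univ.filter (Step G e0), w f| := by rw [hrow]
        _ ≤ ∑ f ∈ Finset.univ.filter (Step G e0), |w f| := Finset.abs_sum_le_sum_abs _ _
        _ ≤ ∑ _f ∈ Finset.univ.filter (Step G e0), |w e0| :=
            Finset.sum_le_sum (fun f _ => hmax f (Finset.mem_univ f))
        _ = ((Finset.univ.filter (Step G e0)).card : ℝ) * |w e0| := by
            rw [Finset.sum_const, nsmul_eq_mul]
        _ ≤ (Fintype.card G.Dart : ℝ) * |w e0| := by
            apply mul_le_mul_of_nonneg_right _ (abs_nonneg _)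
            exact_mod_cast Nat.cast_le.mpr (le_trans (Finset.card_filter_le _ _)
              (le_of_eq (Finset.card_univ)))
    have hsle : |s| ≤ (Fintype.card G.Dart : ℝ) := le_of_mul_le_mul_right habs hw0
    exact le_trans (le_abs_self s) hsle
  · exact ⟨v, hv, he⟩

lemma quad_lower_bound (hdeg : ∀ v, 3 ≤ G.degree v) {l : ℝ} (hl : 0 ≤ l) {y : V → ℝ}
    (hy : ∑ a, y a ^ 2 = 1) (hq : quadF G l y ≤ 0) : l ≤ (Fintype.card V : ℝ) := by
  have hQnn : 0 ≤ ∑ a, Qr G a * y a ^ 2 := by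
    apply Finset.sum_nonneg
    intro a _
    apply mul_nonneg _ (sq_nonneg _)
    have := hdeg a
    rw [Qr]
    have : (3:ℝ) ≤ (G.degree a : ℝ) := by exact_mod_cast this
    linarith
  have habs : ∑ a, |y a| ^ 2 = 1 := by simpa [sq_abs] using hy
  have hcs : (∑ a, |y a|) ^ 2 ≤ (Fintype.card V : ℝ) := by
    have h := Finset.sum_mul_sq_le_sq_mul_sq Finset.univ (fun _ => (1:ℝ)) (fun a => |y a|)
    simp only [one_mul, one_pow, sq_abs, Finset.sum_const, nsmul_eq_mul, mul_one,
      Finset.card_univ] at h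
    rw [hy, mul_one] at h
    exact h
  have hcross : ∑ a, y a * nbrSum G y a ≤ (Fintype.card V : ℝ) := by
    calc ∑ a, y a * nbrSum G y a ≤ ∑ a, |y a| * ∑ b, |y b| := by
          apply Finset.sum_le_sum
          intro a _
          calc y a * nbrSum G y a ≤ |y a * nbrSum G y a| := le_abs_self _
            _ = |y a| * |nbrSum G y a| := abs_mul _ _
            _ ≤ |y a| * ∑ b, |y b| := by
                apply mul_le_mul_of_nonneg_left _ (abs_nonneg _)
                calc |nbrSum G y a| ≤ ∑ b ∈ G.neighborFinset a, |y b| :=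
                      Finset.abs_sum_le_sum_abs _ _
                  _ ≤ ∑ b, |y b| := Finset.sum_le_sum_of_subset_of_nonneg
                      (Finset.subset_univ _) (fun b _ _ => abs_nonneg _)
      _ = (∑ a, |y a|) ^ 2 := by rw [← Finset.sum_mul]; ring
      _ ≤ (Fintype.card V : ℝ) := hcs
  unfold quadF at hq
  rw [hy] at hq
  have hls : l * (∑ a, y a * nbrSum G y a) ≤ l * (Fintype.card V : ℝ) :=
    mul_le_mul_of_nonneg_left hcross hl
  rcases eq_or_lt_of_le hl with h0 | h0
  · rw [← h0]; positivity
  · have : l * l ≤ l * (Fintype.card V : ℝ) := by nlinarith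
    exact le_of_mul_le_mul_left this h0

lemma exists_good_pencil (hdeg : ∀ v, 3 ≤ G.degree v) (hV : Nonempty V) :
    ∃ (l : ℝ) (z : V → ℝ), 2 ≤ l ∧ (∀ y, 0 ≤ quadF G l y) ∧ (∀ a, 0 ≤ z a) ∧ z ≠ 0 ∧
      PencilKer G l z := by
  classical
  have hN : (0:ℝ) < (Fintype.card V : ℝ) := by
    have : 0 < Fintype.card V := Fintype.card_pos_iff.mpr hV
    exact_mod_cast this
  set K : Set (ℝ × (V → ℝ)) :=
    {p | 2 ≤ p.1 ∧ p.1 ≤ (Fintype.card V : ℝ) ∧ (∑ a, p.2 a ^ 2) = 1 ∧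
      quadF G p.1 p.2 ≤ 0} with hKdef
  -- K is nonempty
  have hKne : K.Nonempty := by
    set l0 : ℝ := (∑ a, (G.degree a : ℝ)) / (Fintype.card V : ℝ) - 1 with hl0def
    set c : ℝ := (Real.sqrt (Fintype.card V : ℝ))⁻¹ with hcdef
    have hsqrtN : 0 < Real.sqrt (Fintype.card V : ℝ) := Real.sqrt_pos.mpr hN
    have hc2 : c ^ 2 = ((Fintype.card V : ℝ))⁻¹ := by
      rw [hcdef, inv_pow, Real.sq_sqrt hN.le]
    have hunit : ∑ _a : V, c ^ 2 = 1 := by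
      rw [Finset.sum_const, nsmul_eq_mul, hc2, Finset.card_univ]
      field_simp
    have hD3 : 3 * (Fintype.card V : ℝ) ≤ ∑ a, (G.degree a : ℝ) := by
      calc 3 * (Fintype.card V : ℝ) = ∑ _a : V, (3:ℝ) := by
            rw [Finset.sum_const, nsmul_eq_mul, Finset.card_univ]; ring
        _ ≤ ∑ a, (G.degree a : ℝ) := Finset.sum_le_sum fun a _ => by
            exact_mod_cast hdeg a
    have hl02 : 2 ≤ l0 := by
      rw [hl0def]
      have h3 : 3 ≤ (∑ a, (G.degree a : ℝ)) / (Fintype.card V : ℝ) :=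
        (le_div_iff₀ hN).mpr (by linarith)
      linarith
    have hnbr : ∀ a, nbrSum G (fun _ => c) a = (G.degree a : ℝ) * c := by
      intro a
      rw [nbrSum, Finset.sum_const, nsmul_eq_mul, G.card_neighborFinset_eq_degree]
    have hquad0 : quadF G l0 (fun _ => c) = 0 := by
      unfold quadF
      simp only [hnbr]
      have e1 : ∑ _a : V, c ^ 2 = (Fintype.card V : ℝ) * c ^ 2 := by
        rw [Finset.sum_const, nsmul_eq_mul, Finset.card_univ]
      have e2 : ∑ a, Qr G a * c ^ 2
          = ((∑ a, (G.degree a : ℝ)) - (Fintype.card V : ℝ)) * c ^ 2 := by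
        rw [← Finset.sum_mul]
        congr 1
        unfold Qr
        rw [Finset.sum_sub_distrib, Finset.sum_const, nsmul_eq_mul, mul_one,
          Finset.card_univ]
      have e3 : ∑ a, c * ((G.degree a : ℝ) * c)
          = (∑ a, (G.degree a : ℝ)) * c ^ 2 := by
        rw [Finset.sum_mul]
        exact Finset.sum_congr rfl fun a _ => by ring
      rw [e1, e2, e3, hc2, hl0def]
      field_simp
      ring
    refine ⟨(l0, fun _ => c), hl02, ?_, hunit, le_of_eq hquad0⟩
    exact quad_lower_bound G hdeg (by linarith) hunit (le_of_eq hquad0)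
  -- K is compact
  have hc2 : Continuous fun p : ℝ × (V → ℝ) => ∑ a, p.2 a ^ 2 := by
    apply continuous_finset_sum
    intro a _
    exact ((continuous_apply a).comp continuous_snd).pow 2
  have hc3 : Continuous fun p : ℝ × (V → ℝ) => quadF G p.1 p.2 := by
    apply Continuous.sub
    · apply Continuous.add
      · exact (continuous_fst.pow 2).mul hc2
      · apply continuous_finset_sum
        intro a _
        exact continuous_const.mul (((continuous_apply a).comp continuous_snd).pow 2)
    · apply continuous_fst.mul
      apply continuous_finset_sum
      intro a _
      apply ((continuous_apply a).comp continuous_snd).mul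
      apply continuous_finset_sum
      intro b _
      exact (continuous_apply b).comp continuous_snd
  have hKclosed : IsClosed K := by
    have : K = ((fun p : ℝ × (V → ℝ) => p.1) ⁻¹' Set.Ici 2)
        ∩ (((fun p : ℝ × (V → ℝ) => p.1) ⁻¹' Set.Iic (Fintype.card V : ℝ))
        ∩ (((fun p : ℝ × (V → ℝ) => ∑ a, p.2 a ^ 2) ⁻¹' {1})
        ∩ ((fun p : ℝ × (V → ℝ) => quadF G p.1 p.2) ⁻¹' Set.Iic 0))) := by
      ext p
      simp only [hKdef, Set.mem_setOf_eq, Set.mem_inter_iff, Set.mem_preimage,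
        Set.mem_Ici, Set.mem_Iic, Set.mem_singleton_iff]
      try tauto
    rw [this]
    exact (isClosed_Ici.preimage continuous_fst).inter
      ((isClosed_Iic.preimage continuous_fst).inter
        ((isClosed_singleton.preimage hc2).inter (isClosed_Iic.preimage hc3)))
  have hKbdd : Bornology.IsBounded K := by
    apply Bornology.IsBounded.subset (Metric.isBounded_closedBall
      (x := (0 : ℝ × (V → ℝ))) (r := (Fintype.card V : ℝ) + 1))
    rintro p ⟨h1, h2, h3, _⟩
    rw [Metric.mem_closedBall, dist_zero_right, Prod.norm_def]
    apply max_le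
    · rw [Real.norm_eq_abs, abs_le]
      constructor <;> linarith
    · have hle1 : ∀ a, ‖p.2 a‖ ≤ 1 := by
        intro a
        have hsq : p.2 a ^ 2 ≤ 1 := by
          rw [← h3]
          exact Finset.single_le_sum (fun b _ => sq_nonneg (p.2 b)) (Finset.mem_univ a)
        rw [Real.norm_eq_abs]
        exact (sq_le_one_iff_abs_le_one _).mp hsq
      have : ‖p.2‖ ≤ 1 := pi_norm_le_iff_of_nonneg zero_le_one |>.mpr hle1
      linarith
  have hKcomp : IsCompact K := Metric.isCompact_of_isClosed_isBounded hKclosed hKbdd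
  -- the top of the projection
  set T : Set ℝ := Prod.fst '' K with hTdef
  have hTcomp : IsCompact T := hKcomp.image continuous_fst
  have hTne : T.Nonempty := hKne.image _
  set l1 : ℝ := sSup T with hl1def
  have hl1T : l1 ∈ T := hTcomp.sSup_mem hTne
  obtain ⟨p0, hp0K, hp0fst⟩ := hl1T
  obtain ⟨h2l1, hl1N, hunit0, hquad0⟩ := hp0K
  rw [hp0fst] at h2l1 hl1N hquad0
  set y0 : V → ℝ := p0.2 with hy0def
  -- positive semidefiniteness at l1, first for unit vectors
  have hpsd_unit : ∀ y : V → ℝ, (∑ a, y a ^ 2) = 1 → 0 ≤ quadF G l1 y := by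
    intro y hy
    by_contra hneg
    push_neg at hneg
    set C : ℝ := ∑ a, y a * nbrSum G y a with hCdef
    set E : ℝ := ∑ a, Qr G a * y a ^ 2 with hEdef
    have hform : ∀ l : ℝ, quadF G l y = l ^ 2 - C * l + E := by
      intro l
      unfold quadF
      rw [hy]
      ring
    have hval : l1 ^ 2 - C * l1 + E < 0 := by rw [← hform]; exact hneg
    set val : ℝ := l1 ^ 2 - C * l1 + E with hvaldef
    set δ : ℝ := min 1 (-val / (2 * l1 + |C| + 2)) with hδdef
    have hd : 0 < 2 * l1 + |C| + 2 := by
      have := abs_nonneg C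
      linarith
    have hδpos : 0 < δ := lt_min one_pos (div_pos (by linarith) hd)
    have hδ1 : δ ≤ 1 := min_le_left _ _
    have hδ2 : δ * (2 * l1 + |C| + 2) ≤ -val := by
      have := min_le_right 1 (-val / (2 * l1 + |C| + 2))
      calc δ * (2 * l1 + |C| + 2) ≤ (-val / (2 * l1 + |C| + 2)) * (2 * l1 + |C| + 2) :=
            mul_le_mul_of_nonneg_right (by rw [hδdef]; exact this) hd.le
        _ = -val := by field_simp
    have hnew : quadF G (l1 + δ) y < 0 := by
      rw [hform]
      have hC1 : -C ≤ |C| := neg_le_abs C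
      have k1 : δ * (2 * l1 + δ - C) ≤ δ * (2 * l1 + 1 + |C|) :=
        mul_le_mul_of_nonneg_left (by linarith) hδpos.le
      have k2 : δ * (2 * l1 + 1 + |C|) < δ * (2 * l1 + |C| + 2) :=
        mul_lt_mul_of_pos_left (by linarith) hδpos
      nlinarith
    have hmem : (l1 + δ, y) ∈ K :=
      ⟨show 2 ≤ l1 + δ by linarith,
       show l1 + δ ≤ (Fintype.card V : ℝ) from
         quad_lower_bound G hdeg (by linarith) hy hnew.le,
       hy, hnew.le⟩
    have : l1 + δ ≤ l1 := le_csSup hTcomp.bddAbove ⟨(l1 + δ, y), hmem, rfl⟩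
    linarith
  have hpsd : ∀ w : V → ℝ, 0 ≤ quadF G l1 w := by
    intro w
    by_cases hw : ∑ a, w a ^ 2 = 0
    · have hw0 : w = fun _ => (0:ℝ) := by
        funext a
        have := (Finset.sum_eq_zero_iff_of_nonneg
          (fun b _ => sq_nonneg (w b))).mp hw a (Finset.mem_univ a)
        exact pow_eq_zero_iff two_ne_zero |>.mp this
      rw [hw0]
      simp [quadF, nbrSum]
    · have hpos : 0 < ∑ a, w a ^ 2 :=
        lt_of_le_of_ne (Finset.sum_nonneg fun a _ => sq_nonneg _) (Ne.symm hw)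
      set c : ℝ := (Real.sqrt (∑ a, w a ^ 2))⁻¹ with hcdef
      have hsq : 0 < Real.sqrt (∑ a, w a ^ 2) := Real.sqrt_pos.mpr hpos
      have hcpos : 0 < c := by rw [hcdef]; positivity
      have hc2 : c ^ 2 * (∑ a, w a ^ 2) = 1 := by
        rw [hcdef, inv_pow, Real.sq_sqrt hpos.le]
        field_simp
      have hunit : ∑ a, (c * w a) ^ 2 = 1 := by
        calc ∑ a, (c * w a) ^ 2 = c ^ 2 * ∑ a, w a ^ 2 := by
              rw [Finset.mul_sum]
              exact Finset.sum_congr rfl fun a _ => by ring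
          _ = 1 := hc2
      have h := hpsd_unit (fun a => c * w a) hunit
      rw [quadF_smul] at h
      nlinarith [sq_nonneg c]
  -- the witness
  have hq0 : quadF G l1 y0 = 0 := le_antisymm hquad0 (hpsd y0)
  set z : V → ℝ := fun a => |y0 a| with hzdef
  have hzq : quadF G l1 z = 0 :=
    le_antisymm ((quadF_abs_le G (by linarith : (0:ℝ) ≤ l1) y0).trans hq0.le) (hpsd z)
  refine ⟨l1, z, h2l1, hpsd, fun a => abs_nonneg _, ?_, pencil_of_psd G hpsd hzq⟩
  intro hz0
  have : ∑ a, y0 a ^ 2 = 0 := by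
    apply Finset.sum_eq_zero
    intro a _
    have : |y0 a| = 0 := congrFun hz0 a
    rw [← sq_abs, this]
    norm_num
  rw [hunit0] at this
  norm_num at this

lemma log_jensen {ι : Type} (s : Finset ι) (hs : s.Nonempty) (x : ι → ℝ)
    (hx : ∀ i ∈ s, 0 < x i) :
    ∑ i ∈ s, ((s.card : ℝ))⁻¹ * Real.log (x i)
      ≤ Real.log (∑ i ∈ s, ((s.card : ℝ))⁻¹ * x i) := by
  have hcard : (0:ℝ) < (s.card : ℝ) := by
    exact_mod_cast Finset.card_pos.mpr hs
  have h := (strictConcaveOn_log_Ioi.concaveOn).le_map_sum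
    (t := s) (w := fun _ => ((s.card : ℝ))⁻¹) (p := x)
    (fun i _ => by positivity)
    (by rw [Finset.sum_const, nsmul_eq_mul]; field_simp)
    (fun i hi => Set.mem_Ioi.mpr (hx i hi))
  simpa [smul_eq_mul] using h

lemma log_jensen_eq {ι : Type} (s : Finset ι) (hs : s.Nonempty) (x : ι → ℝ)
    (hx : ∀ i ∈ s, 0 < x i)
    (heq : Real.log (∑ i ∈ s, ((s.card : ℝ))⁻¹ * x i)
      ≤ ∑ i ∈ s, ((s.card : ℝ))⁻¹ * Real.log (x i)) :
    ∀ i ∈ s, ∀ j ∈ s, x i = x j := by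
  have hcard : (0:ℝ) < (s.card : ℝ) := by
    exact_mod_cast Finset.card_pos.mpr hs
  have h := StrictConcaveOn.eq_of_map_sum_eq strictConcaveOn_log_Ioi
    (t := s) (w := fun _ => ((s.card : ℝ))⁻¹) (p := x)
    (fun i _ => by positivity)
    (by rw [Finset.sum_const, nsmul_eq_mul]; field_simp)
    (fun i hi => Set.mem_Ioi.mpr (hx i hi))
    (by simpa [smul_eq_mul] using heq)
  exact h

lemma rows_constant (hdeg : ∀ v, 3 ≤ G.degree v) (hD : Nonempty G.Dart)
    {l : ℝ} (hl : 2 ≤ l) {x : G.Dart → ℝ} (hx : ∀ e, 0 < x e)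
    (heig : (B G).mulVec x = l • x) (hlam : l ≤ Lambda G) :
    l = Lambda G ∧ ∀ e : G.Dart, ∀ f ∈ Finset.univ.filter (Step G e),
      ∀ g ∈ Finset.univ.filter (Step G e), x f = x g := by
  classical
  have hn : 0 < Fintype.card G.Dart := Fintype.card_pos_iff.mpr hD
  have hnR : (0:ℝ) < (Fintype.card G.Dart : ℝ) := by exact_mod_cast hn
  have hod : ∀ e : G.Dart, 2 ≤ outdeg G e := by
    intro e
    have := hdeg e.snd
    unfold outdeg
    omega
  have hodR : ∀ e : G.Dart, (0:ℝ) < (outdeg G e : ℝ) := by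
    intro e
    have := hod e
    exact_mod_cast Nat.lt_of_lt_of_le Nat.zero_lt_two this
  have hcardout : ∀ e : G.Dart, (Finset.univ.filter (Step G e)).card = outdeg G e :=
    fun e => card_out G e
  have houtne : ∀ e : G.Dart, (Finset.univ.filter (Step G e)).Nonempty := by
    intro e
    rw [← Finset.card_pos, hcardout e]
    have := hod e
    omega
  have hrow : ∀ e : G.Dart, ∑ f ∈ Finset.univ.filter (Step G e), x f = l * x e := by
    intro e
    have h := congrFun heig e
    rw [mulVec_B_apply] at h
    simpa [Pi.smul_apply, smul_eq_mul] using h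
  have hl0 : (0:ℝ) < l := by linarith
  -- the weighted average over a row
  have hT : ∀ e : G.Dart, ∑ f ∈ Finset.univ.filter (Step G e), ((outdeg G e : ℝ))⁻¹ * x f
      = ((outdeg G e : ℝ))⁻¹ * (l * x e) := by
    intro e
    rw [← Finset.mul_sum, hrow]
  -- per-row identity : log l + log (x e) = log (outdeg e) + log (T e)
  have hid : ∀ e : G.Dart, Real.log l + Real.log (x e)
      = Real.log ((outdeg G e : ℝ))
        + Real.log (∑ f ∈ Finset.univ.filter (Step G e), ((outdeg G e : ℝ))⁻¹ * x f) := by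
    intro e
    rw [hT e, Real.log_mul (ne_of_gt (inv_pos.mpr (hodR e))) (ne_of_gt (mul_pos hl0 (hx e))),
      Real.log_inv, Real.log_mul (ne_of_gt hl0) (ne_of_gt (hx e))]
    ring
  -- per-row Jensen inequality
  have hjen : ∀ e : G.Dart,
      ∑ f ∈ Finset.univ.filter (Step G e), ((outdeg G e : ℝ))⁻¹ * Real.log (x f)
      ≤ Real.log (∑ f ∈ Finset.univ.filter (Step G e), ((outdeg G e : ℝ))⁻¹ * x f) := by
    intro e
    have h := log_jensen (Finset.univ.filter (Step G e)) (houtne e) x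
      (fun f _ => hx f)
    rwa [hcardout e] at h
  -- definitions of the two row quantities
  set L : G.Dart → ℝ := fun e => Real.log l + Real.log (x e) with hLdef
  set R : G.Dart → ℝ := fun e => Real.log ((outdeg G e : ℝ))
    + ∑ f ∈ Finset.univ.filter (Step G e), ((outdeg G e : ℝ))⁻¹ * Real.log (x f) with hRdef
  have hRL : ∀ e, R e ≤ L e := by
    intro e
    show R e ≤ Real.log l + Real.log (x e)
    rw [hid e]
    exact add_le_add (le_refl _) (hjen e)
  -- sum of L
  have hsumL : ∑ e : G.Dart, L e
      = (Fintype.card G.Dart : ℝ) * Real.log l + ∑ e : G.Dart, Real.log (x e) := by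
    simp only [hLdef]
    rw [Finset.sum_add_distrib, Finset.sum_const, nsmul_eq_mul, Finset.card_univ]
  -- sum of log outdeg = n log Lambda
  have hP : (0:ℝ) < ∏ e : G.Dart, (outdeg G e : ℝ) :=
    Finset.prod_pos fun e _ => hodR e
  have hlogLam : Real.log (Lambda G)
      = ((Fintype.card G.Dart : ℝ))⁻¹ * Real.log (∏ e : G.Dart, (outdeg G e : ℝ)) := by
    unfold Lambda
    rw [Real.log_rpow hP]
  have hsumlog : ∑ e : G.Dart, Real.log ((outdeg G e : ℝ))
      = (Fintype.card G.Dart : ℝ) * Real.log (Lambda G) := by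
    rw [hlogLam, ← Real.log_prod (fun e _ => ne_of_gt (hodR e))]
    field_simp
  -- the double-sum swap
  have hswap : ∑ e : G.Dart, ∑ f ∈ Finset.univ.filter (Step G e),
        ((outdeg G e : ℝ))⁻¹ * Real.log (x f)
      = ∑ f : G.Dart, Real.log (x f) := by
    rw [Finset.sum_congr rfl fun e (_ : e ∈ Finset.univ) => Finset.sum_filter
      (Step G e) (fun f => ((outdeg G e : ℝ))⁻¹ * Real.log (x f))]
    rw [Finset.sum_comm]
    apply Finset.sum_congr rfl
    intro f _
    rw [← Finset.sum_filter]
    have hcongr : ∀ e ∈ Finset.univ.filter (fun e => Step G e f),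
        ((outdeg G e : ℝ))⁻¹ * Real.log (x f)
        = ((G.degree f.fst - 1 : ℕ) : ℝ)⁻¹ * Real.log (x f) := by
      intro e he
      have hstep := (Finset.mem_filter.mp he).2
      have : outdeg G e = G.degree f.fst - 1 := by
        unfold outdeg
        rw [hstep.1]
      rw [this]
    rw [Finset.sum_congr rfl hcongr, Finset.sum_const, card_in, nsmul_eq_mul]
    have hm : ((G.degree f.fst - 1 : ℕ) : ℝ) ≠ 0 := by
      have h3 := hdeg f.fst
      have : 2 ≤ G.degree f.fst - 1 := by omega
      have : (0:ℕ) < G.degree f.fst - 1 := by omega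
      exact_mod_cast Nat.pos_iff_ne_zero.mp this
    field_simp
  -- sum of R
  have hsumR : ∑ e : G.Dart, R e
      = (Fintype.card G.Dart : ℝ) * Real.log (Lambda G) + ∑ e : G.Dart, Real.log (x e) := by
    simp only [hRdef]
    rw [Finset.sum_add_distrib, hsumlog, hswap]
  -- conclude l = Lambda
  have hsum_le : ∑ e : G.Dart, R e ≤ ∑ e : G.Dart, L e :=
    Finset.sum_le_sum fun e _ => hRL e
  rw [hsumR, hsumL] at hsum_le
  have hloglog : Real.log (Lambda G) ≤ Real.log l := by
    have := mul_le_mul_of_nonneg_left (le_refl (1:ℝ)) (le_refl (0:ℝ))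
    nlinarith [hsum_le, hnR]
  have hLam_pos : 0 < Lambda G := lt_of_lt_of_le hl0 hlam
  have hlamle : Lambda G ≤ l := by
    have h1 := Real.exp_le_exp.mpr hloglog
    rwa [Real.exp_log hLam_pos, Real.exp_log hl0] at h1
  have hleq : l = Lambda G := le_antisymm hlam hlamle
  refine ⟨hleq, ?_⟩
  -- equality forces per-row equality
  have hzero : ∑ e : G.Dart, (L e - R e) = 0 := by
    rw [Finset.sum_sub_distrib, hsumR, hsumL, hleq]
    ring
  have hallzero : ∀ e : G.Dart, L e - R e = 0 := by
    intro e
    have h := (Finset.sum_eq_zero_iff_of_nonneg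
      (fun f (_ : f ∈ Finset.univ) => sub_nonneg.mpr (hRL f))).mp hzero
    exact h e (Finset.mem_univ e)
  intro e
  have heqrow : Real.log (∑ f ∈ Finset.univ.filter (Step G e), ((outdeg G e : ℝ))⁻¹ * x f)
      ≤ ∑ f ∈ Finset.univ.filter (Step G e), ((outdeg G e : ℝ))⁻¹ * Real.log (x f) := by
    have h := hallzero e
    simp only [hLdef, hRdef] at h
    have h2 := hid e
    linarith
  have h := log_jensen_eq (Finset.univ.filter (Step G e)) (houtne e) x
    (fun f _ => hx f) (by rwa [hcardout e])
  exact h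

lemma x_nbr_const {x : G.Dart → ℝ} (hdeg : ∀ v, 3 ≤ G.degree v)
    (hconst : ∀ e : G.Dart, ∀ f ∈ Finset.univ.filter (Step G e),
      ∀ g ∈ Finset.univ.filter (Step G e), x f = x g) :
    ∀ (b c c' : V) (h1 : G.Adj b c) (h2 : G.Adj b c'),
      x ⟨(b, c), h1⟩ = x ⟨(b, c'), h2⟩ := by
  intro b c c' h1 h2
  by_cases hcc : c = c'
  · subst hcc; rfl
  · have hne : ((G.neighborFinset b) \ {c, c'}).Nonempty := by
      by_contra hempty
      rw [Finset.not_nonempty_iff_eq_empty, Finset.sdiff_eq_empty_iff_subset] at hempty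
      have hcard := Finset.card_le_card hempty
      rw [G.card_neighborFinset_eq_degree] at hcard
      have hcc2 : ({c, c'} : Finset V).card ≤ 2 := Finset.card_le_two
      have := hdeg b
      omega
    obtain ⟨u, hu⟩ := hne
    rw [Finset.mem_sdiff] at hu
    obtain ⟨hunbr, hunotin⟩ := hu
    have hub : G.Adj b u := by rwa [SimpleGraph.mem_neighborFinset] at hunbr
    have huc : u ≠ c := fun hh => hunotin (by simp [hh])
    have huc' : u ≠ c' := fun hh => hunotin (by simp [hh])
    have hfmem : (⟨(b, c), h1⟩ : G.Dart) ∈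
        Finset.univ.filter (Step G (⟨(u, b), hub.symm⟩ : G.Dart)) := by
      rw [Finset.mem_filter]
      refine ⟨Finset.mem_univ _, rfl, ?_⟩
      intro hcontra
      exact huc (congrArg (fun d : G.Dart => d.snd) hcontra).symm
    have hgmem : (⟨(b, c'), h2⟩ : G.Dart) ∈
        Finset.univ.filter (Step G (⟨(u, b), hub.symm⟩ : G.Dart)) := by
      rw [Finset.mem_filter]
      refine ⟨Finset.mem_univ _, rfl, ?_⟩
      intro hcontra
      exact huc' (congrArg (fun d : G.Dart => d.snd) hcontra).symm
    exact hconst _ _ hfmem _ hgmem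

lemma edge_condition (hdeg : ∀ v, 3 ≤ G.degree v) {l : ℝ} (hl : 2 ≤ l)
    {x : G.Dart → ℝ} (hx : ∀ e, 0 < x e) (heig : (B G).mulVec x = l • x)
    (hconst : ∀ e : G.Dart, ∀ f ∈ Finset.univ.filter (Step G e),
      ∀ g ∈ Finset.univ.filter (Step G e), x f = x g) :
    ∀ a b : V, G.Adj a b → Qr G a * Qr G b = l ^ 2 := by
  have hnbrc := x_nbr_const G hdeg hconst
  have hrow : ∀ e : G.Dart, ∑ f ∈ Finset.univ.filter (Step G e), x f = l * x e := by
    intro e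
    have h := congrFun heig e
    rw [mulVec_B_apply] at h
    simpa [Pi.smul_apply, smul_eq_mul] using h
  have key : ∀ (a b : V) (hab : G.Adj a b),
      l * x ⟨(a, b), hab⟩ = Qr G b * x ⟨(b, a), hab.symm⟩ := by
    intro a b hab
    have h := hrow ⟨(a, b), hab⟩
    have hconstrow : ∀ f ∈ Finset.univ.filter (Step G (⟨(a, b), hab⟩ : G.Dart)),
        x f = x ⟨(b, a), hab.symm⟩ := by
      intro f hf
      have hstep := (Finset.mem_filter.mp hf).2
      have hffst : f.fst = b := hstep.1.symm
      have hfadj : G.Adj b f.snd := by rw [← hffst]; exact f.adj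
      have hfeq : f = (⟨(b, f.snd), hfadj⟩ : G.Dart) := by
        apply SimpleGraph.Dart.ext
        exact Prod.ext hffst rfl
      rw [hfeq]
      exact hnbrc b f.snd a hfadj hab.symm
    rw [Finset.sum_congr rfl hconstrow, Finset.sum_const, card_out, nsmul_eq_mul] at h
    have hcast : ((G.degree b - 1 : ℕ) : ℝ) = Qr G b := by
      unfold Qr
      have h3 := hdeg b
      push_cast [Nat.cast_sub (by omega : 1 ≤ G.degree b)]
      ring
    rw [hcast] at h
    linarith [h]
  intro a b hab
  have h1 := key a b hab
  have h2 := key b a hab.symm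
  have hpos : 0 < x ⟨(a, b), hab⟩ * x ⟨(b, a), hab.symm⟩ :=
    mul_pos (hx _) (hx _)
  have hm : l ^ 2 * (x ⟨(a, b), hab⟩ * x ⟨(b, a), hab.symm⟩)
      = (Qr G a * Qr G b) * (x ⟨(a, b), hab⟩ * x ⟨(b, a), hab.symm⟩) := by
    linear_combination (l * x ⟨(b, a), hab.symm⟩) * h1
      + (Qr G b * x ⟨(b, a), hab.symm⟩) * h2
  exact (mul_right_cancel₀ (ne_of_gt hpos) hm).symm

end Aux


/-- If `G` is NB-irreducible with `ρ(G) = Λ(G)` and has no degree-two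
vertices, then `G` is regular or bipartite bi-regular. -/
theorem regular_or_biregular (h : NBIrreducible G)
    (heq : perron (B G) = Lambda G) (h2 : ∀ v : V, G.degree v ≠ 2) :
    (∃ d : ℕ, G.IsRegularOfDegree d) ∨
    (∃ (s : Set V) (d₁ d₂ : ℕ),
      (∀ v w : V, G.Adj v w → (v ∈ s ↔ w ∉ s)) ∧
      (∀ v ∈ s, G.degree v = d₁) ∧ (∀ v ∉ s, G.degree v = d₂)) := by
  classical
  obtain ⟨hconn, hdeg2, -⟩ := h
  have hdeg : ∀ v, 3 ≤ G.degree v := by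
    intro v
    have ha := hdeg2 v
    have hb := h2 v
    omega
  have hV : Nonempty V := hconn.nonempty
  have hD : Nonempty G.Dart := by
    obtain ⟨v⟩ := hV
    have hpos : 0 < G.degree v := by have := hdeg v; omega
    obtain ⟨w, hw⟩ := (G.degree_pos_iff_exists_adj v).mp hpos
    exact ⟨⟨(v, w), hw⟩⟩
  obtain ⟨l, z, hl2, hpsd, hz0, hzne, hp⟩ := exists_good_pencil G hdeg hV
  have hzpos := pencil_pos G hconn (by linarith : (0:ℝ) < l) hz0 hzne hp
  have hxpos : ∀ e : G.Dart, 0 < l * z e.snd - z e.fst := x_pos G hdeg hl2 hzpos hp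
  have heig := pencil_toEigen G hp
  have hxne : (fun f : G.Dart => l * z f.snd - z f.fst) ≠ 0 := by
    intro h0
    have h1 := congrFun h0 hD.some
    have h2' := hxpos hD.some
    simp only [Pi.zero_apply] at h1
    linarith
  have hle : l ≤ Lambda G := by
    rw [← heq]
    exact eigen_le_perron G hD hxne heig
  obtain ⟨hleq, hconst⟩ := rows_constant G hdeg hD hl2 hxpos heig hle
  have hedge : ∀ a b : V, G.Adj a b → Qr G a * Qr G b = Lambda G ^ 2 := by
    intro a b hab
    rw [← hleq]
    exact edge_condition G hdeg hl2 hxpos heig hconst a b hab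
  -- endgame: every edge satisfies (deg a - 1)(deg b - 1) = Λ²
  obtain ⟨a0⟩ := hV
  obtain ⟨b0, hb0⟩ := (G.degree_pos_iff_exists_adj a0).mp (by have := hdeg a0; omega)
  have hQpos : ∀ v, (0:ℝ) < Qr G v := by
    intro v
    unfold Qr
    have h3 : (3:ℝ) ≤ (G.degree v : ℝ) := by exact_mod_cast hdeg v
    linarith
  have hprod : Qr G a0 * Qr G b0 = Lambda G ^ 2 := hedge a0 b0 hb0
  have hval : ∀ v, Qr G v = Qr G a0 ∨ Qr G v = Qr G b0 := by
    have aux : ∀ (u v : V) (_ : G.Walk u v),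
        (Qr G u = Qr G a0 ∨ Qr G u = Qr G b0) →
          (Qr G v = Qr G a0 ∨ Qr G v = Qr G b0) := by
      intro u v p
      induction p with
      | nil => exact id
      | @cons u u' v hadj q ih =>
        intro hu
        apply ih
        have hvw := hedge u u' hadj
        rcases hu with hu | hu
        · right
          have hm : Qr G u * Qr G u' = Qr G u * Qr G b0 := by rw [hvw, ← hprod, hu]
          exact mul_left_cancel₀ (ne_of_gt (hQpos u)) hm
        · left
          have hm : Qr G u * Qr G u' = Qr G u * Qr G a0 := by
            rw [hvw, ← hprod, hu]; ring
          exact mul_left_cancel₀ (ne_of_gt (hQpos u)) hm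
    intro v
    obtain ⟨p⟩ := hconn.preconnected a0 v
    exact aux a0 v p (Or.inl rfl)
  have hflip1 : ∀ v w, G.Adj v w → Qr G v = Qr G a0 → Qr G w = Qr G b0 := by
    intro v w hvw hv
    have hm : Qr G v * Qr G w = Qr G v * Qr G b0 := by rw [hedge v w hvw, ← hprod, hv]
    exact mul_left_cancel₀ (ne_of_gt (hQpos v)) hm
  have hflip2 : ∀ v w, G.Adj v w → Qr G v = Qr G b0 → Qr G w = Qr G a0 := by
    intro v w hvw hv
    have hm : Qr G v * Qr G w = Qr G v * Qr G a0 := by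
      rw [hedge v w hvw, ← hprod, hv]; ring
    exact mul_left_cancel₀ (ne_of_gt (hQpos v)) hm
  have hdeg_of_Qr : ∀ v w, Qr G v = Qr G w → G.degree v = G.degree w := by
    intro v w hq
    unfold Qr at hq
    have hvw : (G.degree v : ℝ) = (G.degree w : ℝ) := by linarith
    exact_mod_cast hvw
  by_cases hcase : Qr G a0 = Qr G b0
  · left
    refine ⟨G.degree a0, fun v => ?_⟩
    rcases hval v with hv | hv
    · exact hdeg_of_Qr v a0 hv
    · exact hdeg_of_Qr v a0 (by rw [hv, ← hcase])
  · right
    refine ⟨{v | Qr G v = Qr G a0}, G.degree a0, G.degree b0, ?_, ?_, ?_⟩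
    · intro v w hvw
      simp only [Set.mem_setOf_eq]
      constructor
      · intro hv hw
        exact hcase ((hw.symm).trans (hflip1 v w hvw hv))
      · intro hw
        have hwq : Qr G w = Qr G b0 := (hval w).resolve_left hw
        exact hflip2 w v hvw.symm hwq
    · intro v hv
      simp only [Set.mem_setOf_eq] at hv
      exact hdeg_of_Qr v a0 hv
    · intro v hv
      simp only [Set.mem_setOf_eq] at hv
      exact hdeg_of_Qr v b0 ((hval v).resolve_left hv)

end NB
end
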